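/- arXiv:2405.01343 — 4 statements merged into one kernel-verified Lean document; each statement's English description precedes it below -/
import Mathlib

section
/- Assume Hypothesis (HA). If β₁, β₂ ∈ ℝ are such that λ e^{iβ₁} ∈ σ_per(P) and λ e^{iβ₂} ∈ σ_per(P), then λ e^{i(β₁+β₂)} ∈ σ_per(P); i.e. the set of phases of peripheral point eigenvalues of P is closed under addition. -/
open MeasureTheory ProbabilityTheory Filter Topology

namespace QEM

noncomputable section

variable {M : Type*} [MetricSpace M] [CompactSpace M] [MeasurableSpace M] [BorelSpace M]

/-- The weighted Koopman operator on real-valued functions: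
`P f (x) = e^{φ(x)} ∫ f(y) κ(x,dy)`. -/
def PR (φ : M → ℝ) (κ : Kernel M M) (f : M → ℝ) : M → ℝ :=
  fun x => Real.exp (φ x) * ∫ y, f y ∂(κ x)

/-- The weighted Koopman operator on complex-valued functions
(`P f := P(Re f) + i P(Im f)`, equivalently with the complex Bochner integral). -/
def PC (φ : M → ℝ) (κ : Kernel M M) (f : M → ℂ) : M → ℂ :=
  fun x => (Real.exp (φ x) : ℂ) * ∫ y, f y ∂(κ x)

/-- Bounded measurable real-valued functions. -/
def BddMeas (f : M → ℝ) : Prop := Measurable f ∧ ∃ C : ℝ, ∀ x, |f x| ≤ C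

/-- Bounded measurable complex-valued functions. -/
def BddMeasC (f : M → ℂ) : Prop := Measurable f ∧ ∃ C : ℝ, ∀ x, ‖f x‖ ≤ C

/-- The operator `P_g f := P (1_{g>0} · f)`. -/
def Pg (φ : M → ℝ) (κ : Kernel M M) (g : M → ℝ) : (M → ℝ) → (M → ℝ) :=
  fun f => PR φ κ (Set.indicator {x | 0 < g x} f)

/-- Complex version of `P_g`. -/
def PgC (φ : M → ℝ) (κ : Kernel M M) (g : M → ℝ) : (M → ℂ) → (M → ℂ) :=
  fun f => PC φ κ (Set.indicator {x | 0 < g x} f)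

/-- The indicator function of `{g > 0}`. -/
def oneG (g : M → ℝ) : M → ℝ := Set.indicator {x | 0 < g x} (fun _ => (1 : ℝ))

/-- The normalized restriction `μ̃` of `μ` to `{g > 0}`, i.e.
`μ̃(A) = μ(A ∩ {g>0}) / μ({g>0})`. -/
def mtilde (μ : Measure M) (g : M → ℝ) : Measure M :=
  (μ {x | 0 < g x})⁻¹ • μ.restrict {x | 0 < g x}

/-- The root-of-unity phase `e^{2πi j/k}`. -/
def rootU (k j : ℕ) : ℂ := Complex.exp (2 * (Real.pi : ℂ) * Complex.I * (j : ℂ) / (k : ℂ))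

/-- Basic standing setup: `μ` is a fully supported Borel probability measure, `κ` a
sub-Markov kernel with `κ(x,·) ≪ μ` for all `x`, and `φ` a (bounded) continuous function. -/
structure Setup (μ : Measure M) (κ : Kernel M M) (φ : M → ℝ) : Prop where
  prob : IsProbabilityMeasure μ
  fullSupp : ∀ U : Set M, IsOpen U → U.Nonempty → 0 < μ U
  subMarkov : ∀ x, κ x Set.univ ≤ 1
  ac : ∀ x, κ x ≪ μ
  contφ : Continuous φ

/-- Hypothesis (HA): (i) `P` is strong Feller; (ii) `lam > 0` equals the spectral radius of the
induced operator `T` on `L^∞(M,μ;ℂ)` (where `T` agrees a.e. with the pointwise operator `P` on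
bounded measurable representatives); (iii) the eigenspace of `P` at `lam` in `L^∞(M,μ)` is
one-dimensional, spanned by a continuous nonnegative `g ≢ 0` with `P g = lam·g` and
`∫ g dμ = μ {g>0}`; (iv) `P^*μ = lam·μ`. -/
structure HypHA (μ : Measure M) (κ : Kernel M M) (φ : M → ℝ)
    (T : Lp ℂ ⊤ μ →L[ℂ] Lp ℂ ⊤ μ) (lam : ℝ) (g : M → ℝ) : Prop where
  setup : Setup μ κ φ
  strongFeller : ∀ f : M → ℝ, BddMeas f → Continuous (PR φ κ f)
  lam_pos : 0 < lam
  Tcompat : ∀ f : M → ℂ, BddMeasC f → ∀ F : Lp ℂ ⊤ μ, ⇑F =ᵐ[μ] f →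
      ⇑(T F) =ᵐ[μ] PC φ κ f
  specRad : spectralRadius ℂ T = ENNReal.ofReal lam
  g_cont : Continuous g
  g_nonneg : ∀ x, 0 ≤ g x
  g_ne : g ≠ 0
  g_eigen : PR φ κ g = fun x => lam * g x
  g_int : ∫ x, g x ∂μ = (μ {x | 0 < g x}).toReal
  eigen_dim : ∀ f : M → ℝ, BddMeas f → PR φ κ f =ᵐ[μ] (fun x => lam * f x) →
      ∃ c : ℝ, f =ᵐ[μ] fun x => c * g x
  Pstar : ∀ f : M → ℝ, BddMeas f → ∫ x, PR φ κ f x ∂μ = lam * ∫ x, f x ∂μ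

/-- Membership in the point peripheral spectrum `σ_per(P)`:
`|α| = lam` and `P f = α f` for some nonzero `f ∈ L^∞(M,μ;ℂ)`. -/
def PerSpec (μ : Measure M) (κ : Kernel M M) (φ : M → ℝ) (lam : ℝ) (α : ℂ) : Prop :=
  ‖α‖ = lam ∧ ∃ f : M → ℂ, BddMeasC f ∧ ¬ (f =ᵐ[μ] 0) ∧ PC φ κ f =ᵐ[μ] fun x => α * f x

/-- `σ_per(P) = {lam·e^{2πi j/k} : j = 0, …, k-1}`. -/
def PerSpecEq (μ : Measure M) (κ : Kernel M M) (φ : M → ℝ) (lam : ℝ) (k : ℕ) : Prop :=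
  ∀ α : ℂ, PerSpec μ κ φ lam α ↔ ∃ j : ℕ, j < k ∧ α = (lam : ℂ) * rootU k j

/-- A family of `k` linearly independent, nonnegative, continuous functions with pairwise
disjoint supports, spanning `ker(P^k - lam^k)` in `L^∞(M,μ;ℂ)`, each of integral `μ {g>0}`. -/
structure PreFamily (μ : Measure M) (κ : Kernel M M) (φ : M → ℝ) (lam : ℝ) (g : M → ℝ)
    (k : ℕ) (gi : Fin k → M → ℝ) : Prop where
  cont : ∀ i, Continuous (gi i)
  nonneg : ∀ i x, 0 ≤ gi i x
  indep : LinearIndependent ℝ gi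
  span_ker : ∀ f : M → ℂ, BddMeasC f →
      (((PC φ κ)^[k] f) =ᵐ[μ] fun x => (lam : ℂ) ^ k * f x) ↔
        ∃ c : Fin k → ℂ, f =ᵐ[μ] fun x => ∑ i, c i * (gi i x : ℂ)
  integral : ∀ i, ∫ x, gi i x ∂μ = (μ {x | 0 < g x}).toReal
  disj : ∀ i j, i ≠ j → ∀ x, ¬ (0 < gi i x ∧ 0 < gi j x)

/-- The cyclic family hypothesis: nonnegative continuous `g_0, …, g_{k-1}` supported in `{g>0}`
with pairwise disjoint supports, spanning `ker(P^k - lam^k)` in `L^∞(M,μ;ℂ)`, with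
`∫ g_i dμ = μ {g>0}`, `P g_i = lam·g_{i-1 (mod k)}` and `g = (1/k) ∑ g_i`. -/
structure CyclicFamily (μ : Measure M) (κ : Kernel M M) (φ : M → ℝ) (lam : ℝ) (g : M → ℝ)
    (k : ℕ) [NeZero k] (gi : Fin k → M → ℝ) : Prop where
  cont : ∀ i, Continuous (gi i)
  nonneg : ∀ i x, 0 ≤ gi i x
  supported : ∀ i x, 0 < gi i x → 0 < g x
  disj : ∀ i j, i ≠ j → ∀ x, ¬ (0 < gi i x ∧ 0 < gi j x)
  span_ker : ∀ f : M → ℂ, BddMeasC f →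
      (((PC φ κ)^[k] f) =ᵐ[μ] fun x => (lam : ℂ) ^ k * f x) ↔
        ∃ c : Fin k → ℂ, f =ᵐ[μ] fun x => ∑ i, c i * (gi i x : ℂ)
  integral : ∀ i, ∫ x, gi i x ∂μ = (μ {x | 0 < g x}).toReal
  cycle : ∀ i : Fin k, PR φ κ (gi i) = fun x => lam * gi (i - 1) x
  avg : g = fun x => (1 / (k : ℝ)) * ∑ i, gi i x

/-- The spectral decomposition hypothesis: a closed `P_g`-invariant subspace `V` of
`L^∞({g>0},μ;ℂ)` with `L^∞({g>0},μ;ℂ) = span{g_0,…,g_{k-1}} ⊕ V` and such that the spectral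
radius of `P_g` restricted to `V` is `< lam` (expressed through a geometric bound on the
iterates, via Gelfand's formula). -/
structure SpecDecomp (μ : Measure M) (κ : Kernel M M) (φ : M → ℝ) (lam : ℝ) (g : M → ℝ)
    (k : ℕ) (gi : Fin k → M → ℝ) (V : Submodule ℂ (M → ℂ)) : Prop where
  meas : ∀ v ∈ V, Measurable v
  bdd : ∀ v ∈ V, ∃ C : ℝ, ∀ x, ‖v x‖ ≤ C
  supp : ∀ v ∈ V, ∀ x, ¬ 0 < g x → v x = 0
  invariant : ∀ v ∈ V, PgC φ κ g v ∈ V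
  closed : ∀ (u : ℕ → M → ℂ) (f : M → ℂ), (∀ n, u n ∈ V) → Measurable f →
      (∃ C : ℝ, ∀ x, ‖f x‖ ≤ C) → (∀ x, ¬ 0 < g x → f x = 0) →
      Tendsto (fun n => eLpNorm (u n - f) ⊤ μ) atTop (nhds 0) → f ∈ V
  decomp : ∀ f : M → ℂ, BddMeasC f → (∀ x, ¬ 0 < g x → f x = 0) →
      ∃ c : Fin k → ℂ, ∃ v ∈ V, f = fun x => (∑ i, c i * (gi i x : ℂ)) + v x
  unique : ∀ c : Fin k → ℂ, (fun x => ∑ i, c i * (gi i x : ℂ)) ∈ V → c = 0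
  gap : ∃ r : ℝ, 0 ≤ r ∧ r < lam ∧ ∃ C : ℝ, ∀ n : ℕ, ∀ v ∈ V,
      eLpNorm ((PgC φ κ g)^[n] v) ⊤ μ ≤ ENNReal.ofReal (C * r ^ n) * eLpNorm v ⊤ μ

/-- The operator `P^{k+1} - lam^{k+1}` on complex-valued functions. -/
def Qop (φ : M → ℝ) (κ : Kernel M M) (lam : ℝ) (k : ℕ) : (M → ℂ) → (M → ℂ) :=
  fun h x => (PC φ κ)^[k + 1] h x - (lam : ℂ) ^ (k + 1) * h x

/-!
If `P f = α f` with `‖α‖ = λ`, then `λ ‖f‖ ≤ P ‖f‖`, and integrating against `μ` (using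
`P*μ = λ μ`) forces equality, so `‖f‖` is a positive multiple of `g`; after rescaling and changing
`f` on a null set we may assume `‖f‖ = g` everywhere. At each point `x`,
`‖P f (x)‖ = λ g(x) = P ‖f‖ (x)` is the equality case of the triangle inequality for
`∫ f dκ(x,·)`, so `f = u g` holds `κ(x,·)`-a.e. for a constant `u`. Hence for two
such eigenfunctions `f₁, f₂` the function `f₁ f₂ / g` (zero off `{g > 0}`, as `x / 0 = 0`) is
`κ(x,·)`-a.e. equal to `u₁ u₂ g`, and applying `P` shows that it is an eigenfunction for
`α₁ α₂ / λ`.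
-/

open scoped ComplexConjugate ComplexOrder

lemma exists_ae_eq_mul_norm_of_norm_integral_eq {X : Type*} [MeasurableSpace X]
    {ν : Measure X} {F : X → ℂ} (hF : Integrable F ν)
    (h : ‖∫ y, F y ∂ν‖ = ∫ y, ‖F y‖ ∂ν) : ∃ u : ℂ, ∀ᵐ y ∂ν, F y = u * ‖F y‖ := by
  set I := ∫ y, F y ∂ν
  set u := Complex.exp (I.arg * Complex.I)
  have hu : ‖u‖ = 1 := Complex.norm_exp_ofReal_mul_I _
  have hconj : conj u * u = 1 := by
    rw [Complex.conj_mul', hu]; simp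
  have hle : ∀ z, (conj u * z).re ≤ ‖z‖ := fun z =>
    (Complex.re_le_norm _).trans (by rw [norm_mul, Complex.norm_conj, hu, one_mul])
  have hI : conj u * I = ‖I‖ := by
    conv_lhs => rw [← Complex.norm_mul_exp_arg_mul_I I]
    rw [mul_left_comm, hconj, mul_one]
  -- Rotating by the phase of `∫ F` turns the hypothesis into `∫ re (ū F) = ∫ ‖F‖`, while
  -- `re (ū F) ≤ ‖F‖` pointwise.
  have hre_int : Integrable (fun y => (conj u * F y).re) ν := (hF.const_mul _).re
  have hint : ∫ y, (conj u * F y).re ∂ν = ∫ y, ‖F y‖ ∂ν := by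
    rw [show ∫ y, (conj u * F y).re ∂ν = (∫ y, conj u * F y ∂ν).re from
      integral_re (hF.const_mul _), integral_const_mul]
    change (conj u * I).re = _
    rw [hI, Complex.ofReal_re, h]
  have hae := (integral_eq_iff_of_ae_le hre_int hF.norm (ae_of_all _ fun y => hle (F y))).mp hint
  refine ⟨u, ?_⟩
  filter_upwards [hae] with y hy
  have hnorm : ‖conj u * F y‖ = ‖F y‖ := by rw [norm_mul, Complex.norm_conj, hu, one_mul]
  have hreal : conj u * F y = ‖F y‖ := by
    have h0 : 0 ≤ conj u * F y := Complex.re_eq_norm.mp (hy.trans hnorm.symm)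
    rw [Complex.eq_re_of_ofReal_le h0, ← hy]
  calc F y = u * (conj u * F y) := by rw [← mul_assoc, mul_comm u, hconj, one_mul]
    _ = u * ‖F y‖ := by rw [hreal]

section Kernel

variable {X : Type*} [MeasurableSpace X] {κ : Kernel X X} {φ : X → ℝ}

lemma norm_PC_le_PR_norm (f : X → ℂ) (x : X) :
    ‖PC φ κ f x‖ ≤ PR φ κ (fun y => ‖f y‖) x := by
  rw [PC, PR, norm_mul, Complex.norm_real, Real.norm_of_nonneg (Real.exp_pos _).le]
  exact mul_le_mul_of_nonneg_left (norm_integral_le_integral_norm f) (Real.exp_pos _).le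

lemma PC_const_mul (c : ℂ) (f : X → ℂ) (x : X) :
    PC φ κ (fun y => c * f y) x = c * PC φ κ f x := by
  simp only [PC, integral_const_mul]
  ring

lemma PC_congr_ae {μ : Measure X} (hac : ∀ x, κ x ≪ μ) {f f' : X → ℂ} (h : f =ᵐ[μ] f') :
    PC φ κ f = PC φ κ f' :=
  funext fun x => by rw [PC, PC, integral_congr_ae (h.filter_mono (hac x).ae_le)]

lemma PC_eq_mul_PR_of_ae_eq {x : X} {f : X → ℂ} {G : X → ℝ} {u : ℂ}
    (h : ∀ᵐ y ∂κ x, f y = u * G y) : PC φ κ f x = u * PR φ κ G x := by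
  rw [PC, PR, integral_congr_ae h, integral_const_mul, integral_complex_ofReal]
  push_cast
  ring

lemma exists_ae_eq_mul_of_PC_eq {x : X} {h : X → ℂ} {G : X → ℝ} {α : ℂ} {lam : ℝ}
    (hint : Integrable h (κ x)) (hnorm : ∀ y, ‖h y‖ = G y) (hα : ‖α‖ = lam)
    (hG : PR φ κ G x = lam * G x) (hPC : PC φ κ h x = α * h x) :
    ∃ u : ℂ, ∀ᵐ y ∂κ x, h y = u * G y := by
  have hnorm_fun : (fun y => ‖h y‖) = G := funext hnorm
  have hPR : PR φ κ (fun y => ‖h y‖) x = ‖PC φ κ h x‖ := by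
    rw [hnorm_fun, hG, hPC, norm_mul, hα, hnorm]
  have heq : ‖∫ y, h y ∂κ x‖ = ∫ y, ‖h y‖ ∂κ x := by
    rw [PR, PC, norm_mul, Complex.norm_real, Real.norm_of_nonneg (Real.exp_pos _).le] at hPR
    exact (mul_left_cancel₀ (Real.exp_ne_zero _) hPR).symm
  obtain ⟨u, hu⟩ := exists_ae_eq_mul_norm_of_norm_integral_eq hint heq
  exact ⟨u, hu.mono fun y hy => by rw [hy, hnorm]⟩

lemma PC_mul_div_eq {x : X} {h₁ h₂ : X → ℂ} {G : X → ℝ} {α₁ α₂ : ℂ} {lam : ℝ}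
    (hint₁ : Integrable h₁ (κ x)) (hint₂ : Integrable h₂ (κ x))
    (hnorm₁ : ∀ y, ‖h₁ y‖ = G y) (hnorm₂ : ∀ y, ‖h₂ y‖ = G y)
    (hα₁ : ‖α₁‖ = lam) (hα₂ : ‖α₂‖ = lam) (hG : PR φ κ G x = lam * G x)
    (hPC₁ : PC φ κ h₁ x = α₁ * h₁ x) (hPC₂ : PC φ κ h₂ x = α₂ * h₂ x) :
    PC φ κ (fun y => h₁ y * h₂ y / G y) x = α₁ * α₂ / lam * (h₁ x * h₂ x / G x) := by
  obtain ⟨u₁, hu₁⟩ := exists_ae_eq_mul_of_PC_eq hint₁ hnorm₁ hα₁ hG hPC₁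
  obtain ⟨u₂, hu₂⟩ := exists_ae_eq_mul_of_PC_eq hint₂ hnorm₂ hα₂ hG hPC₂
  have hval₁ : α₁ * h₁ x = u₁ * (lam * G x) := by
    rw [← hPC₁, PC_eq_mul_PR_of_ae_eq hu₁, hG]; push_cast; ring
  have hval₂ : α₂ * h₂ x = u₂ * (lam * G x) := by
    rw [← hPC₂, PC_eq_mul_PR_of_ae_eq hu₂, hG]; push_cast; ring
  have hprod : ∀ᵐ y ∂κ x, h₁ y * h₂ y / G y = u₁ * u₂ * G y := by
    filter_upwards [hu₁, hu₂] with y hy₁ hy₂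
    rcases eq_or_ne (G y : ℂ) 0 with hGy | hGy
    · simp [hGy]
    · rw [hy₁, hy₂]; field_simp
  rw [PC_eq_mul_PR_of_ae_eq hprod, hG]
  calc u₁ * u₂ * ↑(lam * G x) = (u₁ * (lam * G x)) * (u₂ * (lam * G x)) / (lam * G x) := by
        push_cast
        rcases eq_or_ne ((lam : ℂ) * G x) 0 with h0 | h0
        · simp [h0]
        · field_simp
    _ = α₁ * α₂ / lam * (h₁ x * h₂ x / G x) := by rw [← hval₁, ← hval₂]; ring

end Kernel

lemma exists_measurable_norm_eq_of_ae {X : Type*} [MeasurableSpace X] {μ : Measure X}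
    {f : X → ℂ} {G : X → ℝ} (hf : Measurable f) (hG : Measurable G) (hG0 : ∀ x, 0 ≤ G x)
    (h : ∀ᵐ x ∂μ, ‖f x‖ = G x) :
    ∃ f' : X → ℂ, Measurable f' ∧ f' =ᵐ[μ] f ∧ ∀ x, ‖f' x‖ = G x := by
  classical
  refine ⟨fun x => if ‖f x‖ = G x then f x else G x,
    Measurable.ite (measurableSet_eq_fun hf.norm hG) hf (Complex.measurable_ofReal.comp hG),
    h.mono fun x hx => if_pos hx, fun x => ?_⟩
  dsimp only
  split_ifs with hx
  · exact hx
  · rw [Complex.norm_real, Real.norm_of_nonneg (hG0 x)]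

lemma norm_mul_div_ofReal_eq {a b : ℂ} {r : ℝ} (ha : ‖a‖ = r) (hb : ‖b‖ = r) :
    ‖a * b / r‖ = r := by
  have hr : 0 ≤ r := ha ▸ norm_nonneg a
  rcases hr.eq_or_lt with rfl | hr
  · simp
  · rw [norm_div, norm_mul, ha, hb, Complex.norm_real, Real.norm_of_nonneg hr.le,
      mul_div_cancel_right₀ _ hr.ne']

lemma BddMeasC.norm {X : Type*} [MeasurableSpace X] {f : X → ℂ} (hf : BddMeasC f) :
    BddMeas fun x => ‖f x‖ :=
  ⟨hf.1.norm, hf.2.choose, fun x => (abs_norm _).trans_le (hf.2.choose_spec x)⟩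

section HypHA

variable {μ : Measure M} {κ : Kernel M M} {φ : M → ℝ} {T : Lp ℂ ⊤ μ →L[ℂ] Lp ℂ ⊤ μ} {lam : ℝ}
  {g : M → ℝ}

lemma HypHA.integrable_of_norm_eq (hHA : HypHA μ κ φ T lam g) (ν : Measure M)
    [IsFiniteMeasure ν] {h : M → ℂ} (hm : Measurable h) (hn : ∀ x, ‖h x‖ = g x) :
    Integrable h ν :=
  (hHA.g_cont.integrable_of_hasCompactSupport (.of_compactSpace g)).mono'
    hm.aestronglyMeasurable (ae_of_all _ fun x => (hn x).le)

lemma HypHA.PR_ae_eq_of_ae_le (hHA : HypHA μ κ φ T lam g) {F : M → ℝ} (hF : BddMeas F)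
    (hle : ∀ᵐ x ∂μ, lam * F x ≤ PR φ κ F x) : PR φ κ F =ᵐ[μ] fun x => lam * F x := by
  have := hHA.setup.prob
  have hFint : Integrable F μ :=
    .of_bound hF.1.aestronglyMeasurable hF.2.choose (ae_of_all _ hF.2.choose_spec)
  have hPRint : Integrable (PR φ κ F) μ :=
    (hHA.strongFeller F hF).integrable_of_hasCompactSupport (.of_compactSpace _)
  refine ((integral_eq_iff_of_ae_le (hFint.const_mul lam) hPRint hle).mp ?_).symm
  rw [integral_const_mul, hHA.Pstar F hF]

lemma HypHA.exists_pos_norm_ae_eq (hHA : HypHA μ κ φ T lam g) {α : ℂ} {f : M → ℂ}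
    (hα : ‖α‖ = lam) (hf : BddMeasC f) (hne : ¬ f =ᵐ[μ] 0)
    (heig : PC φ κ f =ᵐ[μ] fun x => α * f x) :
    ∃ c : ℝ, 0 < c ∧ ∀ᵐ x ∂μ, ‖f x‖ = c * g x := by
  have hle : ∀ᵐ x ∂μ, lam * ‖f x‖ ≤ PR φ κ (fun y => ‖f y‖) x := by
    filter_upwards [heig] with x hx
    rw [← hα, ← norm_mul, ← hx]
    exact norm_PC_le_PR_norm f x
  obtain ⟨c, hc⟩ := hHA.eigen_dim _ hf.norm (hHA.PR_ae_eq_of_ae_le hf.norm hle)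
  refine ⟨c, lt_of_not_ge fun hc0 => hne ?_, hc⟩
  filter_upwards [hc] with x hx
  exact norm_le_zero_iff.mp (hx.trans_le (mul_nonpos_of_nonpos_of_nonneg hc0 (hHA.g_nonneg x)))

lemma HypHA.exists_eigenfunction_norm_eq (hHA : HypHA μ κ φ T lam g) {α : ℂ}
    (hper : PerSpec μ κ φ lam α) :
    ∃ h : M → ℂ, Measurable h ∧ (∀ x, ‖h x‖ = g x) ∧ PC φ κ h =ᵐ[μ] fun x => α * h x := by
  obtain ⟨hα, f, hf, hne, heig⟩ := hper
  obtain ⟨c, hc, hfc⟩ := hHA.exists_pos_norm_ae_eq hα hf hne heig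
  have hnorm : ∀ᵐ x ∂μ, ‖(c⁻¹ : ℂ) * f x‖ = g x := by
    filter_upwards [hfc] with x hx
    rw [norm_mul, hx, norm_inv, Complex.norm_real, Real.norm_of_nonneg hc.le,
      inv_mul_cancel_left₀ hc.ne']
  obtain ⟨h, hm, hfh, hn⟩ :=
    exists_measurable_norm_eq_of_ae (hf.1.const_mul _) hHA.g_cont.measurable hHA.g_nonneg hnorm
  refine ⟨h, hm, hn, ?_⟩
  rw [PC_congr_ae hHA.setup.ac hfh]
  filter_upwards [heig, hfh] with x hx hx'
  rw [PC_const_mul, hx, hx']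
  ring

omit [BorelSpace M] in
lemma HypHA.perSpec_of_norm_eq (hHA : HypHA μ κ φ T lam g) {α : ℂ} {h : M → ℂ}
    (hα : ‖α‖ = lam) (hm : Measurable h) (hn : ∀ x, ‖h x‖ = g x)
    (heig : PC φ κ h =ᵐ[μ] fun x => α * h x) : PerSpec μ κ φ lam α := by
  have : μ.IsOpenPosMeasure := ⟨fun U hU hne => (hHA.setup.fullSupp U hU hne).ne'⟩
  obtain ⟨C, hC⟩ := (isCompact_range hHA.g_cont).bddAbove
  refine ⟨hα, h, ⟨hm, C, fun x => (hn x).trans_le (hC ⟨x, rfl⟩)⟩, fun h0 => hHA.g_ne ?_, heig⟩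
  refine (hHA.g_cont.ae_eq_iff_eq μ continuous_zero).mp ?_
  filter_upwards [h0] with x hx
  rw [← hn x, hx]
  simp

lemma HypHA.PC_mul_div_ae_eq (hHA : HypHA μ κ φ T lam g) {α₁ α₂ : ℂ} {h₁ h₂ : M → ℂ}
    (hα₁ : ‖α₁‖ = lam) (hα₂ : ‖α₂‖ = lam) (hm₁ : Measurable h₁) (hm₂ : Measurable h₂)
    (hn₁ : ∀ x, ‖h₁ x‖ = g x) (hn₂ : ∀ x, ‖h₂ x‖ = g x)
    (he₁ : PC φ κ h₁ =ᵐ[μ] fun x => α₁ * h₁ x) (he₂ : PC φ κ h₂ =ᵐ[μ] fun x => α₂ * h₂ x) :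
    PC φ κ (fun y => h₁ y * h₂ y / g y) =ᵐ[μ] fun x => α₁ * α₂ / lam * (h₁ x * h₂ x / g x) := by
  have : IsFiniteKernel κ := ⟨⟨1, ENNReal.one_lt_top, hHA.setup.subMarkov⟩⟩
  filter_upwards [he₁, he₂] with x hx₁ hx₂
  exact PC_mul_div_eq (hHA.integrable_of_norm_eq _ hm₁ hn₁) (hHA.integrable_of_norm_eq _ hm₂ hn₂)
    hn₁ hn₂ hα₁ hα₂ (congrFun hHA.g_eigen x) hx₁ hx₂

end HypHA

/-- **Step 2 of Lemma A.2.** Under Hypothesis (HA), the set of phases of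
peripheral point eigenvalues of `P` is closed under addition. -/
theorem statement13 (μ : Measure M) (κ : Kernel M M) (φ : M → ℝ)
    (T : Lp ℂ ⊤ μ →L[ℂ] Lp ℂ ⊤ μ) (lam : ℝ) (g : M → ℝ)
    (hHA : HypHA μ κ φ T lam g)
    (β₁ β₂ : ℝ)
    (h1 : PerSpec μ κ φ lam ((lam : ℂ) * Complex.exp (Complex.I * (β₁ : ℂ))))
    (h2 : PerSpec μ κ φ lam ((lam : ℂ) * Complex.exp (Complex.I * (β₂ : ℂ)))) :
    PerSpec μ κ φ lam ((lam : ℂ) * Complex.exp (Complex.I * ((β₁ : ℂ) + (β₂ : ℂ)))) := by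
  obtain ⟨h₁, hm₁, hn₁, he₁⟩ := hHA.exists_eigenfunction_norm_eq h1
  obtain ⟨h₂, hm₂, hn₂, he₂⟩ := hHA.exists_eigenfunction_norm_eq h2
  have hlam : (lam : ℂ) ≠ 0 := Complex.ofReal_ne_zero.mpr hHA.lam_pos.ne'
  have hphase : (lam : ℂ) * Complex.exp (Complex.I * β₁) * (lam * Complex.exp (Complex.I * β₂))
      / lam = lam * Complex.exp (Complex.I * (β₁ + β₂)) := by
    rw [mul_add, Complex.exp_add]
    field_simp
  rw [← hphase]
  exact hHA.perSpec_of_norm_eq (norm_mul_div_ofReal_eq h1.1 h2.1)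
    ((hm₁.mul hm₂).div (Complex.measurable_ofReal.comp hHA.g_cont.measurable))
    (fun x => norm_mul_div_ofReal_eq (hn₁ x) (hn₂ x))
    (hHA.PC_mul_div_ae_eq h1.1 h2.1 hm₁ hm₂ hn₁ hn₂ he₁ he₂)

end

end QEM
end

section
/- Assume Hypothesis (HA) and let k ≥ 1 be a natural number such that σ_per(P) = {λ e^{2πi j/k} : j = 0, 1, …, k−1}. Then g does not lie in the range of P^{k+1} − λ^{k+1} acting on C(M;ℂ); consequently, for every m ≥ 1, ker((P^{k+1} − λ^{k+1})^m) = ker(P^{k+1} − λ^{k+1}) = span_ℂ{g} in C(M;ℂ), i.e. the eigenvalue λ^{k+1} of P^{k+1} is semisimple with one-dimensional generalized eigenspace. -/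
open MeasureTheory ProbabilityTheory Filter Topology

namespace QEM

noncomputable section

variable {M : Type*} [MetricSpace M] [CompactSpace M] [MeasurableSpace M] [BorelSpace M]

/-!
Integrating against the conformal measure `μ` (`P^*μ = lam μ`) annihilates the range of
`Q = P^{k+1} - lam^{k+1}`, whereas `∫ g dμ > 0`, so `g ∉ range Q`. If `P^{k+1} u = lam^{k+1} u`,
averaging the orbit of `u` against the `(k+1)`-th roots of unity `ζ^j` splits `(k+1) u` into
eigenvectors of `P` for the eigenvalues `lam ζ^j`. For `j ≠ 0`, `ζ^j` is not a `k`-th root of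
unity, so `lam ζ^j ∉ σ_per(P)` and that component vanishes; the component at `lam` is a multiple
of `g`. Hence `ker Q = ℂ g`, which meets `range Q` only in `0`, and then `ker Q^m = ker Q`.
-/

theorem _root_.Module.End.pow_apply_of_apply_eq_smul {R N : Type*} [CommSemiring R]
    [AddCommMonoid N] [Module R N] {A : Module.End R N} {c : R} {v : N} (hv : A v = c • v)
    (n : ℕ) : (A ^ n) v = c ^ n • v := by
  induction n with
  | zero => simp
  | succ n ih => rw [pow_succ, Module.End.mul_apply, hv, map_smul, ih, smul_smul, pow_succ']

theorem _root_.Module.End.ker_pow_eq_ker_of_disjoint {R N : Type*} [Semiring R]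
    [AddCommMonoid N] [Module R N] {Q : Module.End R N}
    (h : Disjoint (LinearMap.ker Q) (LinearMap.range Q)) {m : ℕ} (hm : m ≠ 0) :
    LinearMap.ker (Q ^ m) = LinearMap.ker Q := by
  induction m with
  | zero => exact absurd rfl hm
  | succ m ih =>
    rcases eq_or_ne m 0 with rfl | hm0
    · rw [zero_add, pow_one]
    refine le_antisymm (fun x hx => ?_) (fun x hx => ?_)
    · have hker : (Q ^ m) x ∈ LinearMap.ker Q := by
        rwa [LinearMap.mem_ker, ← Module.End.mul_apply, ← pow_succ']
      have hrange : (Q ^ m) x ∈ LinearMap.range Q := by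
        obtain ⟨m, rfl⟩ := Nat.exists_eq_succ_of_ne_zero hm0
        exact ⟨(Q ^ m) x, by rw [pow_succ', Module.End.mul_apply]⟩
      rw [← ih hm0]
      exact Submodule.disjoint_def.mp h _ hker hrange
    · rw [LinearMap.mem_ker] at hx ⊢
      rw [pow_succ, Module.End.mul_apply, hx, map_zero]

section RootsOfUnity

open Finset

variable {K E : Type*} [Field K] [AddCommGroup E] [Module K E]

theorem _root_.Module.End.apply_geom_sum_inv_smul_eq_smul {A : Module.End K E} {c : K}
    (hc : c ≠ 0) {n : ℕ} {u : E} (hu : (A ^ n) u = c ^ n • u) :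
    A ((∑ i ∈ range n, (c⁻¹ • A) ^ i) u) = c • (∑ i ∈ range n, (c⁻¹ • A) ^ i) u := by
  set B := c⁻¹ • A
  have hB : (B ^ n) u = u := by
    rw [smul_pow, LinearMap.smul_apply, hu, smul_smul, ← mul_pow, inv_mul_cancel₀ hc, one_pow,
      one_smul]
  have hfix : B ((∑ i ∈ range n, B ^ i) u) = (∑ i ∈ range n, B ^ i) u := by
    have := congrArg (· u) (mul_geom_sum B n)
    simpa only [LinearMap.sub_apply, Module.End.mul_apply, Module.End.one_apply, hB, sub_self,
      sub_eq_zero] using this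
  calc A ((∑ i ∈ range n, B ^ i) u) = c • B ((∑ i ∈ range n, B ^ i) u) := by
        rw [LinearMap.smul_apply, smul_smul, mul_inv_cancel₀ hc, one_smul]
    _ = c • (∑ i ∈ range n, B ^ i) u := by rw [hfix]

/-- Orthogonality of the characters `j ↦ ζ^{ij}` of `ℤ/n`. -/
theorem _root_.Module.End.sum_geom_sum_inv_smul_rootsOfUnity (A : Module.End K E) (a : K)
    {ζ : K} {n : ℕ} (hζ : IsPrimitiveRoot ζ n) (u : E) :
    ∑ j ∈ range n, (∑ i ∈ range n, ((a * ζ ^ j)⁻¹ • A) ^ i) u = (n : K) • u := by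
  have horth : ∀ i ∈ range n,
      ∑ j ∈ range n, ((a * ζ ^ j)⁻¹) ^ i = if i = 0 then (n : K) else 0 := by
    intro i hi
    split_ifs with h0
    · simp [h0]
    have hx : (ζ ^ i)⁻¹ ≠ 1 := inv_ne_one.mpr (hζ.pow_ne_one_of_pos_of_lt h0 (mem_range.mp hi))
    have hxn : ((ζ ^ i)⁻¹) ^ n = 1 := by
      rw [inv_pow, ← pow_mul, mul_comm, pow_mul, hζ.pow_eq_one, one_pow, inv_one]
    calc ∑ j ∈ range n, ((a * ζ ^ j)⁻¹) ^ i = (a⁻¹) ^ i * ∑ j ∈ range n, ((ζ ^ i)⁻¹) ^ j := by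
          rw [mul_sum]
          refine sum_congr rfl fun j _ => ?_
          rw [mul_inv, mul_pow, ← inv_pow, ← inv_pow, ← pow_mul, ← pow_mul, mul_comm i j]
      _ = 0 := by rw [geom_sum_eq hx, hxn, sub_self, zero_div, mul_zero]
  simp only [LinearMap.sum_apply, smul_pow, LinearMap.smul_apply]
  rw [sum_comm]
  simp only [← sum_smul]
  rw [sum_congr rfl fun i hi => by rw [horth i hi]]
  rcases n.eq_zero_or_pos with rfl | hn
  · simp
  · simp [hn]

end RootsOfUnity

theorem _root_.ContinuousMap.coe_pow_apply_of_semiconj {X 𝕜 : Type*} [TopologicalSpace X]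
    [CommSemiring 𝕜] [TopologicalSpace 𝕜] [IsTopologicalSemiring 𝕜]
    {L : Module.End 𝕜 C(X, 𝕜)} {q : (X → 𝕜) → (X → 𝕜)} (h : ∀ u, ⇑(L u) = q u) (n : ℕ)
    (u : C(X, 𝕜)) : ⇑((L ^ n) u) = q^[n] u := by
  rw [Module.End.pow_apply]
  exact Function.Semiconj.iterate_right (f := DFunLike.coe) h n u

lemma bddMeas_of_continuous {f : M → ℝ} (hf : Continuous f) : BddMeas f := by
  obtain ⟨C, hC⟩ := (isCompact_range hf.abs).bddAbove
  exact ⟨hf.measurable, C, fun x => hC ⟨x, rfl⟩⟩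

lemma bddMeasC_of_continuous {f : M → ℂ} (hf : Continuous f) : BddMeasC f := by
  obtain ⟨C, hC⟩ := (isCompact_range hf.norm).bddAbove
  exact ⟨hf.measurable, C, fun x => hC ⟨x, rfl⟩⟩

lemma Setup.isFiniteKernel {X : Type*} [MetricSpace X] [MeasurableSpace X] {μ : Measure X}
    {κ : Kernel X X} {φ : X → ℝ} (hS : Setup μ κ φ) : IsFiniteKernel κ :=
  ⟨⟨1, ENNReal.one_lt_top, hS.subMarkov⟩⟩

lemma Setup.isOpenPosMeasure {X : Type*} [MetricSpace X] [MeasurableSpace X] {μ : Measure X}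
    {κ : Kernel X X} {φ : X → ℝ} (hS : Setup μ κ φ) : μ.IsOpenPosMeasure :=
  ⟨fun U hU hne => (hS.fullSupp U hU hne).ne'⟩

lemma _root_.Continuous.integrable_of_compactSpace {X E : Type*} [TopologicalSpace X]
    [CompactSpace X] [MeasurableSpace X] [OpensMeasurableSpace X] [NormedAddCommGroup E]
    {ν : Measure X} [IsFiniteMeasure ν] {f : X → E} (hf : Continuous f) : Integrable f ν :=
  hf.integrable_of_hasCompactSupport (HasCompactSupport.of_compactSpace f)

section Koopman

variable {κ : Kernel M M} {φ : M → ℝ} [IsFiniteKernel κ]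

lemma PC_eq_re_add_im {f : M → ℂ} (hf : Continuous f) :
    PC φ κ f = fun x =>
      (PR φ κ (fun y => (f y).re) x : ℂ) + PR φ κ (fun y => (f y).im) x * Complex.I := by
  funext x
  simp only [PC, PR, Complex.ofReal_mul, mul_assoc, ← mul_add]
  congr 1
  rw [← integral_re_add_im hf.integrable_of_compactSpace]
  simp only [RCLike.re_to_complex, RCLike.im_to_complex, RCLike.I_to_complex,
    Complex.coe_algebraMap]

lemma continuous_PC (hSF : ∀ f : M → ℝ, BddMeas f → Continuous (PR φ κ f)) {f : M → ℂ}
    (hf : Continuous f) : Continuous (PC φ κ f) := by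
  rw [PC_eq_re_add_im hf]
  have hre := hSF _ (bddMeas_of_continuous (Complex.continuous_re.comp hf))
  have him := hSF _ (bddMeas_of_continuous (Complex.continuous_im.comp hf))
  fun_prop

variable (hSF : ∀ f : M → ℝ, BddMeas f → Continuous (PR φ κ f))

def koopman : Module.End ℂ C(M, ℂ) where
  toFun f := ⟨PC φ κ f, continuous_PC hSF f.continuous⟩
  map_add' f h := by
    ext x
    simp [PC, integral_add f.continuous.integrable_of_compactSpace
      h.continuous.integrable_of_compactSpace, mul_add]
  map_smul' c f := by
    ext x
    simp only [PC, ContinuousMap.coe_mk, ContinuousMap.coe_smul, Pi.smul_apply, smul_eq_mul,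
      integral_const_mul, RingHom.id_apply]
    ring

lemma coe_koopman_apply (u : C(M, ℂ)) : ⇑(koopman hSF u) = PC φ κ u := rfl

def koopmanQ (lam : ℝ) (k : ℕ) : Module.End ℂ C(M, ℂ) :=
  koopman hSF ^ (k + 1) - ((lam : ℂ) ^ (k + 1)) • 1

lemma coe_koopmanQ_apply (lam : ℝ) (k : ℕ) (u : C(M, ℂ)) :
    ⇑(koopmanQ hSF lam k u) = Qop φ κ lam k u := by
  ext x
  simp [koopmanQ, Qop, ContinuousMap.coe_pow_apply_of_semiconj (coe_koopman_apply hSF)]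

end Koopman

lemma rootU_pow_self (k j : ℕ) : rootU k j ^ k = 1 := by
  rcases eq_or_ne k 0 with rfl | hk
  · exact pow_zero _
  rw [rootU, ← Complex.exp_nat_mul, ← Complex.exp_nat_mul_two_pi_mul_I j]
  congr 1
  field_simp

lemma not_perSpec_lam_mul_pow {X : Type*} [MeasurableSpace X] {μ : Measure X} {κ : Kernel X X}
    {φ : X → ℝ} {lam : ℝ} {k : ℕ} (hk : PerSpecEq μ κ φ lam k) (hlam : lam ≠ 0) {ζ : ℂ}
    (hζ : IsPrimitiveRoot ζ (k + 1)) {j : ℕ} (hj0 : j ≠ 0) (hj : j < k + 1) :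
    ¬ PerSpec μ κ φ lam (lam * ζ ^ j) := by
  intro hper
  obtain ⟨j', -, heq⟩ := (hk _).mp hper
  have hroot : ζ ^ j = rootU k j' := mul_left_cancel₀ (Complex.ofReal_ne_zero.mpr hlam) heq
  have hpowk : (ζ ^ j) ^ k = 1 := by rw [hroot, rootU_pow_self]
  have hpowk1 : (ζ ^ j) ^ (k + 1) = 1 := by
    rw [← pow_mul, mul_comm, pow_mul, hζ.pow_eq_one, one_pow]
  rw [pow_succ, hpowk, one_mul] at hpowk1
  exact hζ.pow_ne_one_of_pos_of_lt hj0 hj hpowk1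

section HypothesisHA

variable {μ : Measure M} {κ : Kernel M M} {φ : M → ℝ} {T : Lp ℂ ⊤ μ →L[ℂ] Lp ℂ ⊤ μ} {lam : ℝ}
  {g : M → ℝ}

def HypHA.eigenfunction (hHA : HypHA μ κ φ T lam g) : C(M, ℂ) :=
  ⟨fun x => (g x : ℂ), Complex.continuous_ofReal.comp hHA.g_cont⟩

lemma HypHA.koopman_eigenfunction [IsFiniteKernel κ] (hHA : HypHA μ κ φ T lam g) :
    koopman hHA.strongFeller hHA.eigenfunction = (lam : ℂ) • hHA.eigenfunction := by
  ext x
  have := congrFun hHA.g_eigen x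
  simp only [coe_koopman_apply, PC, HypHA.eigenfunction, ContinuousMap.coe_mk,
    ContinuousMap.smul_apply, smul_eq_mul]
  exact_mod_cast this

lemma HypHA.integral_koopman [IsFiniteKernel κ] (hHA : HypHA μ κ φ T lam g) (u : C(M, ℂ)) :
    ∫ x, koopman hHA.strongFeller u x ∂μ = lam * ∫ x, u x ∂μ := by
  have := hHA.setup.prob
  have hre : BddMeas fun y => (u y).re := bddMeas_of_continuous (by fun_prop)
  have him : BddMeas fun y => (u y).im := bddMeas_of_continuous (by fun_prop)
  rw [coe_koopman_apply, PC_eq_re_add_im u.continuous,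
    integral_add (hHA.strongFeller _ hre).integrable_of_compactSpace.ofReal
      ((hHA.strongFeller _ him).integrable_of_compactSpace.ofReal.mul_const _),
    integral_mul_const, integral_complex_ofReal, integral_complex_ofReal, hHA.Pstar _ hre, hHA.Pstar _ him,
    ← integral_re_add_im u.continuous.integrable_of_compactSpace]
  simp only [RCLike.re_to_complex, RCLike.im_to_complex, RCLike.I_to_complex,
    Complex.coe_algebraMap, Complex.ofReal_mul]
  ring

lemma HypHA.integral_koopmanQ [IsFiniteKernel κ] (hHA : HypHA μ κ φ T lam g) (k : ℕ)
    (u : C(M, ℂ)) : ∫ x, koopmanQ hHA.strongFeller lam k u x ∂μ = 0 := by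
  have := hHA.setup.prob
  have hpow : ∀ n, ∫ x, (koopman hHA.strongFeller ^ n) u x ∂μ = (lam : ℂ) ^ n * ∫ x, u x ∂μ := by
    intro n
    induction n with
    | zero => simp
    | succ n ih => rw [pow_succ', Module.End.mul_apply, hHA.integral_koopman, ih, pow_succ']; ring
  simp only [koopmanQ, LinearMap.sub_apply, LinearMap.smul_apply, Module.End.one_apply,
    ContinuousMap.coe_sub, ContinuousMap.coe_smul, Pi.sub_apply, Pi.smul_apply, smul_eq_mul]
  rw [integral_sub ((ContinuousMap.continuous _).integrable_of_compactSpace)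
    (u.continuous.integrable_of_compactSpace.const_mul _), integral_const_mul, hpow, sub_self]

lemma HypHA.eigenfunction_notMem_range [IsFiniteKernel κ] (hHA : HypHA μ κ φ T lam g)
    (k : ℕ) : hHA.eigenfunction ∉ LinearMap.range (koopmanQ hHA.strongFeller lam k) := by
  rintro ⟨u, hu⟩
  have := hHA.setup.prob
  have := hHA.setup.isOpenPosMeasure
  obtain ⟨x, hx⟩ := Function.ne_iff.mp hHA.g_ne
  have hpos : 0 < ∫ x, g x ∂μ := integral_pos_of_integrable_nonneg_nonzero hHA.g_cont
    hHA.g_cont.integrable_of_compactSpace hHA.g_nonneg hx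
  have hzero := hHA.integral_koopmanQ k u
  rw [hu] at hzero
  simp only [HypHA.eigenfunction, ContinuousMap.coe_mk, integral_complex_ofReal] at hzero
  exact hpos.ne' (by exact_mod_cast hzero)

lemma HypHA.mem_span_eigenfunction [IsFiniteKernel κ] (hHA : HypHA μ κ φ T lam g)
    {u : C(M, ℂ)} (hu : koopman hHA.strongFeller u = (lam : ℂ) • u) :
    u ∈ ℂ ∙ hHA.eigenfunction := by
  have := hHA.setup.isOpenPosMeasure
  have hg := hHA.g_cont
  have hre : PR φ κ (fun y => (u y).re) = fun x => lam * (u x).re := by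
    funext x
    simpa [coe_koopman_apply, PC_eq_re_add_im u.continuous] using
      congrArg (fun v : C(M, ℂ) => (v x).re) hu
  have him : PR φ κ (fun y => (u y).im) = fun x => lam * (u x).im := by
    funext x
    simpa [coe_koopman_apply, PC_eq_re_add_im u.continuous] using
      congrArg (fun v : C(M, ℂ) => (v x).im) hu
  obtain ⟨cr, hcr⟩ := hHA.eigen_dim _ (bddMeas_of_continuous (by fun_prop)) hre.eventuallyEq
  obtain ⟨ci, hci⟩ := hHA.eigen_dim _ (bddMeas_of_continuous (by fun_prop)) him.eventuallyEq
  have hu_eq : ⇑u = fun x => (cr + ci * Complex.I) * g x := by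
    refine (Continuous.ae_eq_iff_eq μ u.continuous (by fun_prop)).mp ?_
    filter_upwards [hcr, hci] with x hx_re hx_im
    rw [← Complex.re_add_im (u x), hx_re, hx_im]
    push_cast
    ring
  refine Submodule.mem_span_singleton.mpr ⟨cr + ci * Complex.I, ?_⟩
  ext x
  simp [HypHA.eigenfunction, hu_eq]

lemma HypHA.eq_zero_of_koopman_eq_smul [IsFiniteKernel κ] (hHA : HypHA μ κ φ T lam g)
    {α : ℂ} (hα : ¬ PerSpec μ κ φ lam α) (hα_norm : ‖α‖ = lam) {u : C(M, ℂ)}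
    (hu : koopman hHA.strongFeller u = α • u) : u = 0 := by
  have := hHA.setup.isOpenPosMeasure
  by_contra hne
  refine hα ⟨hα_norm, u, bddMeasC_of_continuous u.continuous, fun h0 => hne ?_,
    Eventually.of_forall fun x => congrArg (· x) hu⟩
  ext x
  exact congrFun ((Continuous.ae_eq_iff_eq μ u.continuous continuous_zero).mp h0) x

lemma HypHA.ker_koopmanQ [IsFiniteKernel κ] (hHA : HypHA μ κ φ T lam g) {k : ℕ}
    (hk : PerSpecEq μ κ φ lam k) :
    LinearMap.ker (koopmanQ hHA.strongFeller lam k) = ℂ ∙ hHA.eigenfunction := by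
  set A := koopman hHA.strongFeller
  have hlam : (lam : ℂ) ≠ 0 := Complex.ofReal_ne_zero.mpr hHA.lam_pos.ne'
  refine le_antisymm (fun u hu => ?_) ((Submodule.span_singleton_le_iff_mem _ _).mpr ?_)
  · have hpow : (A ^ (k + 1)) u = (lam : ℂ) ^ (k + 1) • u := by
      simpa [koopmanQ, sub_eq_zero] using hu
    have hζ := Complex.isPrimitiveRoot_exp (k + 1) k.succ_ne_zero
    set ζ := Complex.exp (2 * Real.pi * Complex.I / ↑(k + 1))
    set F : ℕ → C(M, ℂ) := fun j => (∑ i ∈ Finset.range (k + 1), ((lam * ζ ^ j)⁻¹ • A) ^ i) u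
    have hF : ∀ j, A (F j) = ((lam : ℂ) * ζ ^ j) • F j := fun j =>
      Module.End.apply_geom_sum_inv_smul_eq_smul (mul_ne_zero hlam (pow_ne_zero _ (hζ.ne_zero
        k.succ_ne_zero))) (by rw [mul_pow, ← pow_mul, mul_comm j, pow_mul, hζ.pow_eq_one, one_pow,
          mul_one, hpow])
    have hF_zero : ∀ j ∈ Finset.range (k + 1), j ≠ 0 → F j = 0 := fun j hj hj0 =>
      hHA.eq_zero_of_koopman_eq_smul
        (not_perSpec_lam_mul_pow hk hHA.lam_pos.ne' hζ hj0 (Finset.mem_range.mp hj))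
        (by rw [norm_mul, norm_pow, hζ.norm'_eq_one k.succ_ne_zero, one_pow, mul_one,
          Complex.norm_real, Real.norm_of_nonneg hHA.lam_pos.le]) (hF j)
    have hsum : ((k + 1 : ℕ) : ℂ) • u = F 0 := by
      rw [← Module.End.sum_geom_sum_inv_smul_rootsOfUnity A lam hζ u,
        Finset.sum_eq_single 0 hF_zero (by simp)]
    have hF0 : F 0 ∈ ℂ ∙ hHA.eigenfunction := hHA.mem_span_eigenfunction (by simpa using hF 0)
    rw [← hsum] at hF0
    exact (Submodule.smul_mem_iff _ (Nat.cast_ne_zero.mpr k.succ_ne_zero)).mp hF0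
  · rw [LinearMap.mem_ker, koopmanQ, LinearMap.sub_apply,
      Module.End.pow_apply_of_apply_eq_smul hHA.koopman_eigenfunction, LinearMap.smul_apply,
      Module.End.one_apply, sub_self]

end HypothesisHA

theorem statement16_general (μ : Measure M) (κ : Kernel M M) (φ : M → ℝ)
    (T : Lp ℂ ⊤ μ →L[ℂ] Lp ℂ ⊤ μ) (lam : ℝ) (g : M → ℝ)
    (hHA : HypHA μ κ φ T lam g)
    (k : ℕ) (hk : PerSpecEq μ κ φ lam k) :
    (¬ ∃ f : M → ℂ, Continuous f ∧ Qop φ κ lam k f = fun x => (g x : ℂ)) ∧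
    (∀ m : ℕ, 1 ≤ m → ∀ f : M → ℂ, Continuous f →
      ((Qop φ κ lam k)^[m] f = 0 ↔ ∃ c : ℂ, f = fun x => c * (g x : ℂ))) := by
  have := hHA.setup.isFiniteKernel
  set Q := koopmanQ hHA.strongFeller lam k
  have hrange := hHA.eigenfunction_notMem_range k
  have hker_pow : ∀ m ≠ 0, LinearMap.ker (Q ^ m) = ℂ ∙ hHA.eigenfunction := fun m hm => by
    rw [Module.End.ker_pow_eq_ker_of_disjoint _ hm, hHA.ker_koopmanQ hk]
    rw [hHA.ker_koopmanQ hk]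
    exact (Submodule.disjoint_span_singleton.mpr fun h => absurd h hrange).symm
  refine ⟨fun ⟨f, hf, hQf⟩ => hrange ⟨⟨f, hf⟩, ?_⟩, fun m hm f hf => ?_⟩
  · ext x
    simp [coe_koopmanQ_apply, hQf, HypHA.eigenfunction]
  · have key := SetLike.ext_iff.mp (hker_pow m (by omega)) ⟨f, hf⟩
    rw [LinearMap.mem_ker, Submodule.mem_span_singleton] at key
    rw [← ContinuousMap.coe_mk f hf,
      ← ContinuousMap.coe_pow_apply_of_semiconj (coe_koopmanQ_apply hHA.strongFeller lam k)]
    rw [← ContinuousMap.coe_zero, DFunLike.coe_fn_eq, key]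
    simp only [ContinuousMap.ext_iff, funext_iff]
    exact exists_congr fun c => forall_congr' fun x => eq_comm

/-- **Step 3 of Lemma A.3.** Under Hypothesis (HA) with
`σ_per(P) = {lam e^{2πi j/k}}_{j<k}`: `g` is not in the range of `P^{k+1} - lam^{k+1}` on
`C(M;ℂ)`, and for every `m ≥ 1` the kernel of `(P^{k+1} - lam^{k+1})^m` in `C(M;ℂ)` equals
`span_ℂ{g}`; i.e. the eigenvalue `lam^{k+1}` of `P^{k+1}` is semisimple with one-dimensional
generalized eigenspace. -/
theorem statement16 (μ : Measure M) (κ : Kernel M M) (φ : M → ℝ)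
    (T : Lp ℂ ⊤ μ →L[ℂ] Lp ℂ ⊤ μ) (lam : ℝ) (g : M → ℝ)
    (hHA : HypHA μ κ φ T lam g)
    (k : ℕ) (hk1 : 1 ≤ k) (hk : PerSpecEq μ κ φ lam k) :
    (¬ ∃ f : M → ℂ, Continuous f ∧ Qop φ κ lam k f = fun x => (g x : ℂ)) ∧
    (∀ m : ℕ, 1 ≤ m → ∀ f : M → ℂ, Continuous f →
      ((Qop φ κ lam k)^[m] f = 0 ↔ ∃ c : ℂ, f = fun x => c * (g x : ℂ))) :=
  statement16_general μ κ φ T lam g hHA k hk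

end

end QEM
end

section
/- If f ∈ C(M;ℝ) satisfies P f = λ f, then also P f⁺ = λ f⁺ and P f⁻ = λ f⁻; in particular P |f| = λ |f|. -/
open MeasureTheory

lemma aux_zero {M : Type*} [MetricSpace M] [CompactSpace M]
    [MeasurableSpace M] [BorelSpace M]
    (μ : Measure M) [IsProbabilityMeasure μ]
    (hsupp : ∀ U : Set M, IsOpen U → U.Nonempty → 0 < μ U)
    (h : C(M, ℝ)) (hnn : ∀ x, 0 ≤ h x) (hint : ∫ x, h x ∂μ = 0) : h = 0 := by
  have hi : Integrable (fun x => h x) μ :=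
    h.continuous.integrable_of_hasCompactSupport (HasCompactSupport.of_compactSpace _)
  have hae : ∀ᵐ y ∂μ, h y = 0 :=
    (integral_eq_zero_iff_of_nonneg (fun x => hnn x) hi).mp hint
  have hnull : μ {y | ¬ h y = 0} = 0 := ae_iff.mp hae
  ext x
  by_contra hx
  have hpos : 0 < h x := lt_of_le_of_ne (hnn x) (Ne.symm (by simpa using hx))
  set U := {y | h x / 2 < h y} with hU
  have hUopen : IsOpen U := isOpen_lt continuous_const h.continuous
  have hUne : U.Nonempty := ⟨x, by simp only [hU, Set.mem_setOf_eq]; linarith⟩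
  have hμU : 0 < μ U := hsupp U hUopen hUne
  have hsub : U ⊆ {y | ¬ h y = 0} := by
    intro y hy
    simp only [hU, Set.mem_setOf_eq] at hy ⊢
    intro h0; rw [h0] at hy; linarith
  exact absurd (measure_mono_null hsub hnull) hμU.ne'

lemma aux_pos {M : Type*} [MetricSpace M] [CompactSpace M]
    [MeasurableSpace M] [BorelSpace M]
    (μ : Measure M) [IsProbabilityMeasure μ]
    (hsupp : ∀ U : Set M, IsOpen U → U.Nonempty → 0 < μ U)
    (T : C(M, ℝ) →L[ℝ] C(M, ℝ))
    (hpos : ∀ f : C(M, ℝ), (∀ x, 0 ≤ f x) → ∀ x, 0 ≤ T f x)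
    (lam : ℝ) (hlam : 0 < lam)
    (hstar : ∀ f : C(M, ℝ), ∫ x, T f x ∂μ = lam * ∫ x, f x ∂μ)
    (f : C(M, ℝ)) (hf : T f = lam • f) :
    T (f ⊔ 0) = lam • (f ⊔ 0) := by
  set g : C(M, ℝ) := f ⊔ 0 with hg
  have hgf : ∀ x, f x ≤ g x := fun x => by
    simp [hg, ContinuousMap.sup_apply, le_max_iff]
  have hg0 : ∀ x, 0 ≤ g x := fun x => by simp [hg, ContinuousMap.sup_apply]
  have hTg_ge_Tf : ∀ x, T f x ≤ T g x := by
    intro x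
    have := hpos (g - f) (fun y => by simp [sub_nonneg, hgf y]) x
    simp only [map_sub, ContinuousMap.sub_apply] at this
    linarith
  have hTg0 : ∀ x, 0 ≤ T g x := hpos g hg0
  have hlow : ∀ x, lam * g x ≤ T g x := by
    intro x
    have h1 : lam * f x ≤ T g x := by
      have := hTg_ge_Tf x
      rw [hf] at this
      simpa [ContinuousMap.smul_apply] using this
    have : g x = max (f x) 0 := by simp [hg, ContinuousMap.sup_apply]
    rw [this]
    rcases le_total (f x) 0 with hc | hc
    · rw [max_eq_right hc]; simpa using hTg0 x
    · rw [max_eq_left hc]; exact h1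
  set d : C(M, ℝ) := T g - lam • g with hd
  have hdnn : ∀ x, 0 ≤ d x := by
    intro x
    simp only [hd, ContinuousMap.sub_apply, ContinuousMap.smul_apply, smul_eq_mul, sub_nonneg]
    exact hlow x
  have hgint : Integrable (fun x => g x) μ :=
    g.continuous.integrable_of_hasCompactSupport (HasCompactSupport.of_compactSpace _)
  have hTgint : Integrable (fun x => T g x) μ :=
    (T g).continuous.integrable_of_hasCompactSupport (HasCompactSupport.of_compactSpace _)
  have hdint : ∫ x, d x ∂μ = 0 := by
    have : ∫ x, d x ∂μ = ∫ x, T g x ∂μ - lam * ∫ x, g x ∂μ := by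
      simp only [hd, ContinuousMap.sub_apply, ContinuousMap.smul_apply, smul_eq_mul]
      rw [integral_sub hTgint (hgint.const_mul lam), integral_const_mul]
    rw [this, hstar g, sub_self]
  have hd0 : d = 0 := aux_zero μ hsupp d hdnn hdint
  have : T g - lam • g = 0 := hd0
  linear_combination (norm := module) this

/-- **part of the proof of Theorem A.5 / A.10.** Let `M` be a compact metric
space, `T` a positive bounded linear operator on `C(M;ℝ)`, `μ` a fully supported Borel
probability measure on `M` and `lam > 0` with `∫ T f dμ = lam ∫ f dμ` for all continuous `f`.
If `T f = lam f` then also `T f⁺ = lam f⁺` and `T f⁻ = lam f⁻`; in particular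
`T |f| = lam |f|`. -/
theorem statement17 {M : Type*} [MetricSpace M] [CompactSpace M]
    [MeasurableSpace M] [BorelSpace M]
    (μ : Measure M) (hprob : IsProbabilityMeasure μ)
    (hsupp : ∀ U : Set M, IsOpen U → U.Nonempty → 0 < μ U)
    (T : C(M, ℝ) →L[ℝ] C(M, ℝ))
    (hpos : ∀ f : C(M, ℝ), (∀ x, 0 ≤ f x) → ∀ x, 0 ≤ T f x)
    (lam : ℝ) (hlam : 0 < lam)
    (hstar : ∀ f : C(M, ℝ), ∫ x, T f x ∂μ = lam * ∫ x, f x ∂μ)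
    (f : C(M, ℝ)) (hf : T f = lam • f) :
    T (f ⊔ 0) = lam • (f ⊔ 0) ∧ T ((-f) ⊔ 0) = lam • ((-f) ⊔ 0) ∧
      T |f| = lam • |f| := by
  have h1 : T (f ⊔ 0) = lam • (f ⊔ 0) := aux_pos μ hsupp T hpos lam hlam hstar f hf
  have hnf : T (-f) = lam • (-f) := by rw [map_neg, hf, smul_neg]
  have h2 : T ((-f) ⊔ 0) = lam • ((-f) ⊔ 0) := aux_pos μ hsupp T hpos lam hlam hstar (-f) hnf
  refine ⟨h1, h2, ?_⟩
  have habs : |f| = (f ⊔ 0) + ((-f) ⊔ 0) := by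
    rw [← posPart_add_negPart f]
    rw [posPart_def, negPart_def]
  rw [habs, map_add, h1, h2, smul_add]
end

section
/- Assume Hypothesis (HA), the cyclic family hypothesis, and the spectral decomposition hypothesis; define μ̃_i(A) := μ̃(A ∩ C_i) for i ∈ {0,…,k−1}, indices taken mod k. Then for every bounded measurable h : M → ℝ, all ℓ, s ∈ {0,…,k−1}, and every x ∈ C_s: λ^{-(nk+ℓ)} · P_g^{nk+ℓ} h(x) → g_s(x) · ∫_M h dμ̃_{s+ℓ (mod k)} as n → ∞. -/
open MeasureTheory ProbabilityTheory Filter Topology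

namespace QEM

noncomputable section

variable {M : Type*} [MetricSpace M] [CompactSpace M] [MeasurableSpace M] [BorelSpace M]

/-!
Decompose `1_{g>0} h = ∑ c_i g_i + v` with `v ∈ V`. Since `P_g g_i = λ g_{i-1}`, on `C_s` the
iterate `λ^{-N} P_g^N (∑ c_i g_i)` is exactly `c_{s+N} g_s`, while `λ^{-N} P_g^N v → 0` by the
spectral gap (one further application of `P`, whose kernel is absolutely continuous with respect
to `μ`, turns the `L^∞` bound into a pointwise one). The coefficients are read off by duality:
`P^*μ = λμ` together with the cyclic structure gives `∫_{C_j} P_g w dμ = λ ∫_{C_{j+1}} w dμ`,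
hence `∫_{C_j} v dμ = 0` for `v ∈ V` and `c_j μ(g>0) = ∫_{C_j} h dμ`.
-/

open Fin.NatCast Fin.CommRing

section Measurable

variable {X : Type*} [MeasurableSpace X]

lemma BddMeasC.integrable {ν : Measure X} [IsFiniteMeasure ν] {f : X → ℂ} (hf : BddMeasC f) :
    Integrable f ν :=
  let ⟨hm, C, hC⟩ := hf
  (integrable_const C).mono' hm.aestronglyMeasurable (.of_forall hC)

lemma BddMeasC.indicator {s : Set X} (hs : MeasurableSet s) {f : X → ℂ} (hf : BddMeasC f) :
    BddMeasC (s.indicator f) := by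
  obtain ⟨hm, C, hC⟩ := hf
  refine ⟨hm.indicator hs, C, fun x => ?_⟩
  by_cases hx : x ∈ s
  · simpa [hx] using hC x
  · simpa [hx] using (norm_nonneg _).trans (hC x)

lemma BddMeas.ofReal {u : X → ℝ} (hu : BddMeas u) : BddMeasC fun x => (u x : ℂ) :=
  let ⟨hm, C, hC⟩ := hu
  ⟨Complex.measurable_ofReal.comp hm, C, fun x => by simpa using hC x⟩

lemma BddMeasC.re {u : X → ℂ} (hu : BddMeasC u) : BddMeas fun x => (u x).re :=
  let ⟨hm, C, hC⟩ := hu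
  ⟨Complex.measurable_re.comp hm, C, fun x => (Complex.abs_re_le_norm _).trans (hC x)⟩

lemma BddMeasC.im {u : X → ℂ} (hu : BddMeasC u) : BddMeas fun x => (u x).im :=
  let ⟨hm, C, hC⟩ := hu
  ⟨Complex.measurable_im.comp hm, C, fun x => (Complex.abs_im_le_norm _).trans (hC x)⟩

lemma ae_norm_le_of_eLpNorm_top_le {E : Type*} [NormedAddCommGroup E] {μ : Measure X}
    {f : X → E} {B : ℝ} (hB : 0 ≤ B) (h : eLpNorm f ⊤ μ ≤ ENNReal.ofReal B) :
    ∀ᵐ y ∂μ, ‖f y‖ ≤ B := by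
  rw [eLpNorm_exponent_top] at h
  filter_upwards [enorm_ae_le_eLpNormEssSup f μ] with y hy
  rw [← ENNReal.ofReal_le_ofReal_iff hB, ofReal_norm]
  exact hy.trans h

lemma integral_mtilde_restrict (μ : Measure X) (g : X → ℝ) {A : Set X} (hA : MeasurableSet A)
    (hAS : A ⊆ {x | 0 < g x}) (h : X → ℝ) :
    ∫ y, h y ∂(mtilde μ g).restrict A = ((μ {x | 0 < g x}).toReal)⁻¹ * ∫ y in A, h y ∂μ := by
  rw [mtilde, Measure.restrict_smul, integral_smul_measure, ENNReal.toReal_inv,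
    Measure.restrict_restrict hA, Set.inter_eq_self_of_subset_left hAS, smul_eq_mul]

variable {κ : Kernel X X} {φ : X → ℝ}

lemma isFiniteKernel_of_le_one (hκ : ∀ x, κ x Set.univ ≤ 1) : IsFiniteKernel κ :=
  ⟨⟨1, ENNReal.one_lt_top, hκ⟩⟩

lemma norm_PC_apply_le (hκ : ∀ x, κ x Set.univ ≤ 1) {f : X → ℂ} {B : ℝ} (hB : 0 ≤ B) {x : X}
    (hf : ∀ᵐ y ∂κ x, ‖f y‖ ≤ B) : ‖PC φ κ f x‖ ≤ Real.exp (φ x) * B := by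
  have := isFiniteKernel_of_le_one hκ
  have hint : ‖∫ y, f y ∂κ x‖ ≤ B :=
    calc ‖∫ y, f y ∂κ x‖ ≤ B * (κ x Set.univ).toReal := norm_integral_le_of_norm_le_const hf
      _ ≤ B * 1 := by gcongr; exact ENNReal.toReal_le_of_le_ofReal zero_le_one (by simpa using hκ x)
      _ = B := mul_one B
  rw [PC, norm_mul, Complex.norm_real, Real.norm_of_nonneg (Real.exp_pos _).le]
  gcongr

lemma PC_apply_eq_zero_of_null {s : Set X} {f : X → ℂ} (hf : ∀ y ∉ s, f y = 0) {x : X}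
    (hx : κ x s = 0) : PC φ κ f x = 0 := by
  rw [PC, integral_eq_zero_of_ae ((measure_eq_zero_iff_ae_notMem.mp hx).mono hf), mul_zero]

lemma PC_ofReal (u : X → ℝ) : PC φ κ (fun y => (u y : ℂ)) = fun x => (PR φ κ u x : ℂ) := by
  ext x
  rw [PC, PR, integral_complex_ofReal, Complex.ofReal_mul]

lemma PgC_ofReal (g u : X → ℝ) :
    PgC φ κ g (fun y => (u y : ℂ)) = fun x => (Pg φ κ g u x : ℂ) := by
  rw [PgC, Pg, ← PC_ofReal]
  congr 1
  ext y
  by_cases hy : 0 < g y <;> simp [hy]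

lemma iterate_PgC_ofReal (g u : X → ℝ) (n : ℕ) :
    (PgC φ κ g)^[n] (fun y => (u y : ℂ)) = fun x => ((Pg φ κ g)^[n] u x : ℂ) := by
  induction n with
  | zero => rfl
  | succ n ih => rw [Function.iterate_succ_apply', ih, PgC_ofReal, Function.iterate_succ_apply']

lemma iterate_PgC_indicator_apply {g : X → ℝ} (u : X → ℂ) {x : X} (hx : 0 < g x) (n : ℕ) :
    (PgC φ κ g)^[n] ({y | 0 < g y}.indicator u) x = (PgC φ κ g)^[n] u x := by
  cases n with
  | zero => exact Set.indicator_of_mem (show x ∈ {y | 0 < g y} from hx) u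
  | succ n =>
    have hPgC : PgC φ κ g ({y | 0 < g y}.indicator u) = PgC φ κ g u := by
      rw [PgC, Set.indicator_indicator, Set.inter_self, PgC]
    rw [Function.iterate_succ_apply, Function.iterate_succ_apply, hPgC]

lemma re_PC_apply {u : X → ℂ} (x : X) (hu : Integrable u (κ x)) :
    (PC φ κ u x).re = PR φ κ (fun y => (u y).re) x := by
  rw [PC, PR, Complex.re_ofReal_mul]
  exact congrArg _ (integral_re hu).symm

lemma im_PC_apply {u : X → ℂ} (x : X) (hu : Integrable u (κ x)) :
    (PC φ κ u x).im = PR φ κ (fun y => (u y).im) x := by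
  rw [PC, PR, Complex.im_ofReal_mul]
  exact congrArg _ (integral_im hu).symm

lemma PgC_add [IsFiniteKernel κ] {g : X → ℝ} (hg : MeasurableSet {x | 0 < g x}) {u w : X → ℂ}
    (hu : BddMeasC u) (hw : BddMeasC w) : PgC φ κ g (u + w) = PgC φ κ g u + PgC φ κ g w := by
  ext x
  simp only [PgC, PC, Set.indicator_add', Pi.add_apply, mul_add,
    integral_add (hu.indicator hg).integrable (hw.indicator hg).integrable]

end Measurable

section Compact

variable {X : Type*} [TopologicalSpace X] [CompactSpace X] [MeasurableSpace X]
  [OpensMeasurableSpace X] {κ : Kernel X X} {φ : X → ℝ}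

lemma bddMeasC_of_continuous_s18 {u : X → ℂ} (hu : Continuous u) : BddMeasC u := by
  obtain ⟨C, hC⟩ := isCompact_univ.exists_bound_of_continuousOn hu.continuousOn
  exact ⟨hu.measurable, C, fun x => hC x (Set.mem_univ x)⟩

lemma kernel_pos_null_of_PR_eq_zero {w : X → ℝ} (hw : Continuous w) (hw0 : 0 ≤ w) {x : X}
    [IsFiniteMeasure (κ x)] (hx : PR φ κ w x = 0) : κ x {y | 0 < w y} = 0 := by
  have hint : ∫ y, w y ∂κ x = 0 := (mul_eq_zero.mp hx).resolve_left (Real.exp_pos _).ne'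
  have hwi : Integrable w (κ x) := hw.integrable_of_hasCompactSupport (.of_compactSpace w)
  exact measure_mono_null (fun y hy => ne_of_gt hy)
    ((Measure.measure_support_eq_zero_iff _).mpr ((integral_eq_zero_iff_of_nonneg hw0 hwi).mp hint))

lemma bddMeasC_PC (hκ : ∀ x, κ x Set.univ ≤ 1) (hφ : Continuous φ) {f : X → ℂ}
    (hf : BddMeasC f) : BddMeasC (PC φ κ f) := by
  have := isFiniteKernel_of_le_one hκ
  obtain ⟨hm, C, hC⟩ := hf
  obtain ⟨E, hE⟩ := isCompact_univ.exists_bound_of_continuousOn (hφ.rexp).continuousOn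
  refine ⟨?_, E * max C 0, fun x => ?_⟩
  · exact (by fun_prop : Measurable fun x => (Real.exp (φ x) : ℂ)).mul
      (StronglyMeasurable.integral_kernel_prod_right (f := fun _ y => f y)
        (hm.comp measurable_snd).stronglyMeasurable).measurable
  · refine (norm_PC_apply_le hκ (le_max_right C 0)
      (.of_forall fun y => (hC y).trans (le_max_left C 0))).trans ?_
    gcongr
    simpa using hE x (Set.mem_univ x)

lemma bddMeasC_PgC (hκ : ∀ x, κ x Set.univ ≤ 1) (hφ : Continuous φ) {g : X → ℝ}
    (hg : MeasurableSet {x | 0 < g x}) {f : X → ℂ} (hf : BddMeasC f) :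
    BddMeasC (PgC φ κ g f) :=
  bddMeasC_PC hκ hφ (hf.indicator hg)

lemma bddMeasC_iterate_PgC (hκ : ∀ x, κ x Set.univ ≤ 1) (hφ : Continuous φ) {g : X → ℝ}
    (hg : MeasurableSet {x | 0 < g x}) {f : X → ℂ} (hf : BddMeasC f) (n : ℕ) :
    BddMeasC ((PgC φ κ g)^[n] f) := by
  induction n with
  | zero => exact hf
  | succ n ih => rw [Function.iterate_succ_apply']; exact bddMeasC_PgC hκ hφ hg ih

lemma iterate_PgC_add (hκ : ∀ x, κ x Set.univ ≤ 1) (hφ : Continuous φ) {g : X → ℝ}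
    (hg : MeasurableSet {x | 0 < g x}) {u w : X → ℂ} (hu : BddMeasC u) (hw : BddMeasC w)
    (n : ℕ) : (PgC φ κ g)^[n] (u + w) = (PgC φ κ g)^[n] u + (PgC φ κ g)^[n] w := by
  have := isFiniteKernel_of_le_one hκ
  induction n with
  | zero => rfl
  | succ n ih =>
    simp only [Function.iterate_succ_apply', ih]
    exact PgC_add hg (bddMeasC_iterate_PgC hκ hφ hg hu n) (bddMeasC_iterate_PgC hκ hφ hg hw n)

lemma integral_PC (hκ : ∀ x, κ x Set.univ ≤ 1) (hφ : Continuous φ) {μ : Measure X}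
    [IsFiniteMeasure μ] {lam : ℝ}
    (hP : ∀ f : X → ℝ, BddMeas f → ∫ x, PR φ κ f x ∂μ = lam * ∫ x, f x ∂μ)
    {u : X → ℂ} (hu : BddMeasC u) : ∫ x, PC φ κ u x ∂μ = lam * ∫ x, u x ∂μ := by
  have := isFiniteKernel_of_le_one hκ
  have hPu : Integrable (PC φ κ u) μ := (bddMeasC_PC hκ hφ hu).integrable
  apply Complex.ext
  · calc (∫ x, PC φ κ u x ∂μ).re = ∫ x, PR φ κ (fun y => (u y).re) x ∂μ := by
          refine (integral_re hPu).symm.trans ?_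
          exact integral_congr_ae (.of_forall fun x => re_PC_apply x hu.integrable)
      _ = (lam * ∫ x, u x ∂μ).re := by
          rw [hP _ hu.re, Complex.re_ofReal_mul]
          exact congrArg _ (integral_re hu.integrable)
  · calc (∫ x, PC φ κ u x ∂μ).im = ∫ x, PR φ κ (fun y => (u y).im) x ∂μ := by
          refine (integral_im hPu).symm.trans ?_
          exact integral_congr_ae (.of_forall fun x => im_PC_apply x hu.integrable)
      _ = (lam * ∫ x, u x ∂μ).im := by
          rw [hP _ hu.im, Complex.im_ofReal_mul]
          exact congrArg _ (integral_im hu.integrable)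

end Compact

def linComb {X : Type*} {k : ℕ} (gi : Fin k → X → ℝ) (d : Fin k → ℂ) : X → ℂ :=
  fun x => ∑ i, d i * (gi i x : ℂ)

namespace CyclicFamily

variable {X : Type*} [MetricSpace X] [MeasurableSpace X] {μ : Measure X} {κ : Kernel X X}
  {φ : X → ℝ} {lam : ℝ} {g : X → ℝ} {k : ℕ} [NeZero k] {gi : Fin k → X → ℝ}

lemma eq_zero_of_pos (hgi : CyclicFamily μ κ φ lam g k gi) {i j : Fin k} (hij : i ≠ j) {x : X}
    (hi : 0 < gi i x) : gi j x = 0 :=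
  le_antisymm (not_lt.mp fun hj => hgi.disj i j hij x ⟨hi, hj⟩) (hgi.nonneg j x)

lemma exists_pos_of_pos (hgi : CyclicFamily μ κ φ lam g k gi) {x : X} (hx : 0 < g x) :
    ∃ i, 0 < gi i x := by
  by_contra! h
  have hzero : ∀ i, gi i x = 0 := fun i => le_antisymm (h i) (hgi.nonneg i x)
  exact hx.ne' (by simp [hgi.avg, hzero])

lemma linComb_apply_of_pos (hgi : CyclicFamily μ κ φ lam g k gi) (d : Fin k → ℂ) {j : Fin k}
    {x : X} (hx : 0 < gi j x) : linComb gi d x = d j * gi j x :=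
  Finset.sum_eq_single j (fun i _ hij => by simp [hgi.eq_zero_of_pos hij.symm hx]) (by simp)

lemma linComb_apply_of_not_pos (hgi : CyclicFamily μ κ φ lam g k gi) (d : Fin k → ℂ) {x : X}
    (hx : ¬ 0 < g x) : linComb gi d x = 0 :=
  Finset.sum_eq_zero fun i _ => by
    simp [le_antisymm (not_lt.mp fun h => hx (hgi.supported i x h)) (hgi.nonneg i x)]

lemma continuous_linComb (hgi : CyclicFamily μ κ φ lam g k gi) (d : Fin k → ℂ) :
    Continuous (linComb gi d) := by
  have := hgi.cont
  unfold linComb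
  fun_prop

lemma measurableSet_pos [OpensMeasurableSpace X] (hgi : CyclicFamily μ κ φ lam g k gi)
    (i : Fin k) : MeasurableSet {x | 0 < gi i x} :=
  (isOpen_lt continuous_const (hgi.cont i)).measurableSet

lemma setIntegral_linComb [OpensMeasurableSpace X] (hgi : CyclicFamily μ κ φ lam g k gi)
    (d : Fin k → ℂ) (j : Fin k) :
    ∫ x in {y | 0 < gi j y}, linComb gi d x ∂μ = d j * (μ {x | 0 < g x}).toReal := by
  calc ∫ x in {y | 0 < gi j y}, linComb gi d x ∂μ
        = ∫ x in {y | 0 < gi j y}, d j * (gi j x : ℂ) ∂μ :=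
        setIntegral_congr_fun (hgi.measurableSet_pos j) fun x hx => hgi.linComb_apply_of_pos d hx
    _ = ∫ x, d j * (gi j x : ℂ) ∂μ :=
        setIntegral_eq_integral_of_forall_compl_eq_zero fun x hx => by
          simp [le_antisymm (not_lt.mp hx) (hgi.nonneg j x)]
    _ = d j * (μ {x | 0 < g x}).toReal := by
        rw [integral_const_mul, integral_complex_ofReal, hgi.integral]

variable [CompactSpace X] [OpensMeasurableSpace X]

lemma kernel_succ_null (hgi : CyclicFamily μ κ φ lam g k gi) [IsFiniteKernel κ] {j : Fin k}
    {x : X} (hx : gi j x = 0) : κ x {y | 0 < gi (j + 1) y} = 0 :=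
  kernel_pos_null_of_PR_eq_zero (hgi.cont _) (hgi.nonneg _) (φ := φ) (by
    rw [congrFun (hgi.cycle (j + 1)) x, add_sub_cancel_right, hx, mul_zero])

lemma kernel_null_of_ne (hgi : CyclicFamily μ κ φ lam g k gi) [IsFiniteKernel κ] {j m : Fin k}
    {x : X} (hx : 0 < gi j x) (hm : m ≠ j + 1) : κ x {y | 0 < gi m y} = 0 := by
  have hj : j ≠ m - 1 := fun h => hm (by rw [h, sub_add_cancel])
  simpa using hgi.kernel_succ_null (hgi.eq_zero_of_pos hj hx)

/-- From `P g_{m} = λ g_{m-1}`: a point of `C_j` charges no `C_m` with `m ≠ j + 1`, and a point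
outside `C_j` does not charge `C_{j+1}`. -/
lemma indicator_PgC (hgi : CyclicFamily μ κ φ lam g k gi) [IsFiniteKernel κ] (w : X → ℂ)
    (j : Fin k) :
    {x | 0 < gi j x}.indicator (PgC φ κ g w) = PC φ κ ({y | 0 < gi (j + 1) y}.indicator w) := by
  ext x
  by_cases hx : x ∈ {x | 0 < gi j x}
  · rw [Set.indicator_of_mem hx, PgC, PC, PC]
    congr 1
    apply integral_congr_ae
    have hnull : κ x (⋃ m, ⋃ (_ : m ≠ j + 1), {y | 0 < gi m y}) = 0 :=
      measure_iUnion_null fun m => measure_iUnion_null fun hm => hgi.kernel_null_of_ne hx hm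
    filter_upwards [measure_eq_zero_iff_ae_notMem.mp hnull] with y hy
    simp only [Set.mem_iUnion, Set.mem_ofPred_eq, not_exists] at hy
    by_cases hy1 : 0 < gi (j + 1) y
    · simp [hy1, hgi.supported _ _ hy1]
    · have hg : ¬ 0 < g y := fun hg => by
        obtain ⟨m, hm⟩ := hgi.exists_pos_of_pos hg
        by_cases hmj : m = j + 1
        · exact hy1 (hmj ▸ hm)
        · exact hy m hmj hm
      simp [hy1, hg]
  · rw [Set.indicator_of_notMem hx]
    exact (PC_apply_eq_zero_of_null (fun y hy => Set.indicator_of_notMem hy w)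
      (hgi.kernel_succ_null (le_antisymm (not_lt.mp hx) (hgi.nonneg j x)))).symm

lemma setIntegral_PgC (hgi : CyclicFamily μ κ φ lam g k gi) (hS : Setup μ κ φ)
    (hP : ∀ f : X → ℝ, BddMeas f → ∫ x, PR φ κ f x ∂μ = lam * ∫ x, f x ∂μ)
    {w : X → ℂ} (hw : BddMeasC w) (j : Fin k) :
    ∫ x in {y | 0 < gi j y}, PgC φ κ g w x ∂μ
      = lam * ∫ x in {y | 0 < gi (j + 1) y}, w x ∂μ := by
  have := isFiniteKernel_of_le_one hS.subMarkov
  have := hS.prob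
  rw [← integral_indicator (hgi.measurableSet_pos j), hgi.indicator_PgC,
    integral_PC hS.subMarkov hS.contφ hP (hw.indicator (hgi.measurableSet_pos _)),
    integral_indicator (hgi.measurableSet_pos _)]

lemma setIntegral_iterate_PgC (hgi : CyclicFamily μ κ φ lam g k gi) (hS : Setup μ κ φ)
    (hP : ∀ f : X → ℝ, BddMeas f → ∫ x, PR φ κ f x ∂μ = lam * ∫ x, f x ∂μ)
    (hg : MeasurableSet {x | 0 < g x}) (n : ℕ) {w : X → ℂ} (hw : BddMeasC w) (j : Fin k) :
    ∫ x in {y | 0 < gi j y}, (PgC φ κ g)^[n] w x ∂μ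
      = lam ^ n * ∫ x in {y | 0 < gi (j + n) y}, w x ∂μ := by
  induction n generalizing w j with
  | zero => simp
  | succ n ih =>
    rw [Function.iterate_succ_apply, ih (bddMeasC_PgC hS.subMarkov hS.contφ hg hw),
      hgi.setIntegral_PgC hS hP hw, Nat.cast_succ, add_assoc, pow_succ]
    ring

lemma PgC_linComb (hgi : CyclicFamily μ κ φ lam g k gi) [IsFiniteKernel κ] (d : Fin k → ℂ) :
    PgC φ κ g (linComb gi d) = linComb gi fun i => lam * d (i + 1) := by
  ext x
  have hind : {y | 0 < g y}.indicator (linComb gi d) = linComb gi d := by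
    ext y
    by_cases hy : 0 < g y
    · simp [hy]
    · simp [hy, hgi.linComb_apply_of_not_pos d hy]
  have hcyc : ∀ i, (Real.exp (φ x) : ℂ) * ∫ y, (gi i y : ℂ) ∂κ x = lam * gi (i - 1) x :=
    fun i => by rw [integral_complex_ofReal]; exact_mod_cast congrFun (hgi.cycle i) x
  rw [PgC, hind, PC]
  unfold linComb
  have hint : ∀ i, Integrable (fun y => (gi i y : ℂ)) (κ x) := fun i =>
    (bddMeasC_of_continuous_s18 (Complex.continuous_ofReal.comp (hgi.cont i))).integrable
  rw [integral_finsetSum _ fun i _ => (hint i).const_mul (d i)]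
  simp only [integral_const_mul, Finset.mul_sum, mul_left_comm _ (d _), hcyc]
  exact Fintype.sum_equiv (Equiv.subRight 1) _ _ fun i => by simp; ring

lemma iterate_PgC_linComb (hgi : CyclicFamily μ κ φ lam g k gi) [IsFiniteKernel κ] (n : ℕ)
    (d : Fin k → ℂ) :
    (PgC φ κ g)^[n] (linComb gi d) = linComb gi fun i => lam ^ n * d (i + n) := by
  induction n generalizing d with
  | zero => simp
  | succ n ih =>
    rw [Function.iterate_succ_apply, hgi.PgC_linComb, ih]
    congr 1
    ext i
    rw [Nat.cast_succ, ← add_assoc, pow_succ]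
    ring

end CyclicFamily

namespace SpecDecomp

variable {X : Type*} [MeasurableSpace X] {μ : Measure X} {κ : Kernel X X} {φ : X → ℝ} {lam : ℝ}
  {g : X → ℝ} {k : ℕ} {gi : Fin k → X → ℝ} {V : Submodule ℂ (X → ℂ)}

lemma bddMeasC (hV : SpecDecomp μ κ φ lam g k gi V) {v : X → ℂ} (hv : v ∈ V) : BddMeasC v :=
  ⟨hV.meas v hv, hV.bdd v hv⟩

lemma exists_ae_norm_iterate_PgC_le (hV : SpecDecomp μ κ φ lam g k gi V) (hlam : 0 < lam) {v : X → ℂ}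
    (hv : v ∈ V) : ∃ b : ℕ → ℝ, Tendsto b atTop (𝓝 0) ∧
      ∀ n, ∀ᵐ y ∂μ, ‖(PgC φ κ g)^[n] v y‖ ≤ lam ^ n * b n := by
  obtain ⟨r, hr0, hrlam, C, hgap⟩ := hV.gap
  obtain ⟨B, hB⟩ := hV.bdd v hv
  set C' := max C 0
  set B' := max B 0
  refine ⟨fun n => C' * B' * (r / lam) ^ n, ?_, fun n => ae_norm_le_of_eLpNorm_top_le
    (by positivity) ?_⟩
  · simpa using (tendsto_pow_atTop_nhds_zero_of_lt_one (div_nonneg hr0 hlam.le)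
      ((div_lt_one hlam).mpr hrlam)).const_mul (C' * B')
  · have hvB : eLpNorm v ⊤ μ ≤ ENNReal.ofReal B' :=
      eLpNorm_le_of_ae_bound (.of_forall fun y => (hB y).trans (le_max_left B 0)) |>.trans
        (by simp [B'])
    calc eLpNorm ((PgC φ κ g)^[n] v) ⊤ μ ≤ ENNReal.ofReal (C * r ^ n) * eLpNorm v ⊤ μ :=
          hgap n v hv
      _ ≤ ENNReal.ofReal (C' * r ^ n) * ENNReal.ofReal B' := by
          gcongr
          exact le_max_left C 0
      _ = ENNReal.ofReal (lam ^ n * (C' * B' * (r / lam) ^ n)) := by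
          rw [← ENNReal.ofReal_mul (by positivity), div_pow]
          congr 1
          field_simp

variable [MetricSpace X]

lemma tendsto_inv_pow_mul_iterate_PgC (hV : SpecDecomp μ κ φ lam g k gi V) (hS : Setup μ κ φ)
    (hlam : 0 < lam) {v : X → ℂ} (hv : v ∈ V) (x : X) :
    Tendsto (fun n => ((lam : ℂ) ^ n)⁻¹ * (PgC φ κ g)^[n] v x) atTop (𝓝 0) := by
  obtain ⟨b, hb, hbound⟩ := hV.exists_ae_norm_iterate_PgC_le hlam hv
  rw [← tendsto_add_atTop_iff_nat 1]
  -- one more application of `P` turns the `μ`-a.e. bound into a bound at the point `x`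
  have hle : ∀ n, ‖((lam : ℂ) ^ (n + 1))⁻¹ * (PgC φ κ g)^[n + 1] v x‖
      ≤ Real.exp (φ x) / lam * |b n| := fun n => by
    have hae : ∀ᵐ y ∂κ x, ‖{y | 0 < g y}.indicator ((PgC φ κ g)^[n] v) y‖ ≤ lam ^ n * |b n| :=
      (hS.ac x).ae_le ((hbound n).mono fun y hy => (norm_indicator_le_norm_self _ _).trans
        (hy.trans (by gcongr; exact le_abs_self _)))
    have hPC := norm_PC_apply_le hS.subMarkov (by positivity) hae (φ := φ)
    rw [Function.iterate_succ_apply', norm_mul, norm_inv, norm_pow, Complex.norm_real,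
      Real.norm_of_nonneg hlam.le]
    calc (lam ^ (n + 1))⁻¹ * ‖PgC φ κ g ((PgC φ κ g)^[n] v) x‖
        ≤ (lam ^ (n + 1))⁻¹ * (Real.exp (φ x) * (lam ^ n * |b n|)) := by gcongr; exact hPC
      _ = Real.exp (φ x) / lam * |b n| := by field_simp; ring
  exact squeeze_zero_norm hle (by simpa using hb.abs.const_mul (Real.exp (φ x) / lam))

variable [CompactSpace X] [OpensMeasurableSpace X] [NeZero k]

lemma setIntegral_eq_zero (hV : SpecDecomp μ κ φ lam g k gi V)
    (hgi : CyclicFamily μ κ φ lam g k gi) (hS : Setup μ κ φ) (hlam : 0 < lam)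
    (hP : ∀ f : X → ℝ, BddMeas f → ∫ x, PR φ κ f x ∂μ = lam * ∫ x, f x ∂μ)
    (hg : MeasurableSet {x | 0 < g x}) {v : X → ℂ} (hv : v ∈ V) (j : Fin k) :
    ∫ x in {y | 0 < gi j y}, v x ∂μ = 0 := by
  have := hS.prob
  obtain ⟨b, hb, hbound⟩ := hV.exists_ae_norm_iterate_PgC_le hlam hv
  set C := {y | 0 < gi j y}
  -- `∫_{C_j} v` is unchanged by `λ^{-k} P_g^k`, which contracts `V` geometrically.
  have hle : ∀ m, ‖∫ x in C, v x ∂μ‖ ≤ b (m * k) * μ.real C := fun m => by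
    have hiter := hgi.setIntegral_iterate_PgC hS hP hg (m * k) (hV.bddMeasC hv) j
    rw [Nat.cast_mul, Fin.natCast_self, mul_zero, add_zero] at hiter
    have hnorm := norm_integral_le_of_norm_le_const (ae_restrict_of_ae (hbound (m * k)))
      (μ := μ.restrict C)
    rw [hiter, norm_mul, norm_pow, Complex.norm_real, Real.norm_of_nonneg hlam.le,
      Measure.real, Measure.restrict_apply_univ, mul_assoc] at hnorm
    exact le_of_mul_le_mul_left hnorm (pow_pos hlam _)
  have hlim : Tendsto (fun m => b (m * k) * μ.real C) atTop (𝓝 0) := by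
    simpa using (hb.comp (tendsto_id.atTop_mul_const' (Nat.pos_of_neZero k))).mul_const _
  exact norm_le_zero_iff.mp (ge_of_tendsto hlim (.of_forall hle))


lemma setIntegral_linComb_add (hV : SpecDecomp μ κ φ lam g k gi V)
    (hgi : CyclicFamily μ κ φ lam g k gi) (hS : Setup μ κ φ) (hlam : 0 < lam)
    (hP : ∀ f : X → ℝ, BddMeas f → ∫ x, PR φ κ f x ∂μ = lam * ∫ x, f x ∂μ)
    (hg : MeasurableSet {x | 0 < g x}) (c : Fin k → ℂ) {v : X → ℂ} (hv : v ∈ V) (j : Fin k) :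
    ∫ x in {y | 0 < gi j y}, (linComb gi c + v) x ∂μ = c j * (μ {x | 0 < g x}).toReal := by
  have := hS.prob
  rw [integral_add' (bddMeasC_of_continuous_s18 (hgi.continuous_linComb c)).integrable.integrableOn
      (hV.bddMeasC hv).integrable.integrableOn,
    hgi.setIntegral_linComb, hV.setIntegral_eq_zero hgi hS hlam hP hg hv, add_zero]

end SpecDecomp

theorem tendsto_inv_pow_mul_iterate_PgC_setIntegral {X : Type*} [MetricSpace X] [CompactSpace X]
    [MeasurableSpace X] [OpensMeasurableSpace X] {μ : Measure X} {κ : Kernel X X} {φ : X → ℝ}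
    {lam : ℝ} {g : X → ℝ} {k : ℕ} [NeZero k] {gi : Fin k → X → ℝ} {V : Submodule ℂ (X → ℂ)}
    (hS : Setup μ κ φ) (hlam : 0 < lam)
    (hP : ∀ f : X → ℝ, BddMeas f → ∫ x, PR φ κ f x ∂μ = lam * ∫ x, f x ∂μ)
    (hg : Continuous g) (hgi : CyclicFamily μ κ φ lam g k gi)
    (hV : SpecDecomp μ κ φ lam g k gi V) {f : X → ℂ} (hf : BddMeasC f)
    (hfS : ∀ x, ¬ 0 < g x → f x = 0) (ℓ : Fin k) {s : Fin k} {x : X} (hx : 0 < gi s x) :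
    Tendsto (fun n : ℕ =>
        ((lam : ℂ) ^ (n * k + (ℓ : ℕ)))⁻¹ * (PgC φ κ g)^[n * k + (ℓ : ℕ)] f x) atTop
      (𝓝 (gi s x * ((μ {x | 0 < g x}).toReal)⁻¹ * ∫ y in {z | 0 < gi (s + ℓ) z}, f y ∂μ)) := by
  have := isFiniteKernel_of_le_one hS.subMarkov
  have := hS.prob
  have hgS : MeasurableSet {x | 0 < g x} := (isOpen_lt continuous_const hg).measurableSet
  obtain ⟨c, v, hv, hfcv⟩ := hV.decomp f hf hfS
  replace hfcv : f = linComb gi c + v := hfcv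
  subst hfcv
  have hc : BddMeasC (linComb gi c) := bddMeasC_of_continuous_s18 (hgi.continuous_linComb c)
  have hμS : (μ {x | 0 < g x}).toReal ≠ 0 := by
    refine ENNReal.toReal_ne_zero.mpr ⟨fun h0 => ?_, measure_ne_top μ _⟩
    refine (hS.fullSupp _ (isOpen_lt continuous_const (hgi.cont s)) ⟨x, hx⟩).ne' ?_
    exact measure_mono_null (fun y hy => hgi.supported s y hy) h0
  have hlim : gi s x * ((μ {x | 0 < g x}).toReal)⁻¹ *
      ∫ y in {z | 0 < gi (s + ℓ) z}, (linComb gi c + v) y ∂μ = c (s + ℓ) * gi s x := by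
    rw [hV.setIntegral_linComb_add hgi hS hlam hP hgS c hv]
    have : ((μ {x | 0 < g x}).toReal : ℂ) ≠ 0 := by exact_mod_cast hμS
    push_cast
    field_simp
  have hiter : ∀ n : ℕ, ((lam : ℂ) ^ (n * k + (ℓ : ℕ)))⁻¹ *
      (PgC φ κ g)^[n * k + (ℓ : ℕ)] (linComb gi c + v) x = c (s + ℓ) * gi s x +
        ((lam : ℂ) ^ (n * k + (ℓ : ℕ)))⁻¹ * (PgC φ κ g)^[n * k + (ℓ : ℕ)] v x := fun n => by
    have hN : ((n * k + (ℓ : ℕ) : ℕ) : Fin k) = ℓ := by simp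
    have hlamN : (lam : ℂ) ^ (n * k + (ℓ : ℕ)) ≠ 0 := pow_ne_zero _ (by exact_mod_cast hlam.ne')
    rw [iterate_PgC_add hS.subMarkov hS.contφ hgS hc (hV.bddMeasC hv), Pi.add_apply,
      hgi.iterate_PgC_linComb, hgi.linComb_apply_of_pos _ hx, hN, mul_add, mul_assoc,
      inv_mul_cancel_left₀ hlamN]
  rw [hlim]
  refine Tendsto.congr (fun n => (hiter n).symm) ?_
  simpa using tendsto_const_nhds.add ((hV.tendsto_inv_pow_mul_iterate_PgC hS hlam hv x).comp
    ((tendsto_add_atTop_nat _).comp (tendsto_id.atTop_mul_const' (Nat.pos_of_neZero k))))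

theorem statement18_general (μ : Measure M) (κ : Kernel M M) (φ : M → ℝ)
    (T : Lp ℂ ⊤ μ →L[ℂ] Lp ℂ ⊤ μ) (lam : ℝ) (g : M → ℝ)
    (hHA : HypHA μ κ φ T lam g)
    (k : ℕ) [NeZero k]
    (gi : Fin k → M → ℝ) (hgi : CyclicFamily μ κ φ lam g k gi)
    (V : Submodule ℂ (M → ℂ)) (hV : SpecDecomp μ κ φ lam g k gi V) :
    ∀ h : M → ℝ, BddMeas h → ∀ (ℓ s : Fin k) (x : M), 0 < gi s x →
      Tendsto (fun n : ℕ =>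
          (lam ^ (n * k + (ℓ : ℕ)))⁻¹ * (Pg φ κ g)^[n * k + (ℓ : ℕ)] h x) atTop
        (nhds (gi s x * ∫ y, h y ∂((mtilde μ g).restrict {z | 0 < gi (s + ℓ) z}))) := by
  intro h hh ℓ s x hx
  have hgS : MeasurableSet {x | 0 < g x} := (isOpen_lt continuous_const hHA.g_cont).measurableSet
  have hlim := tendsto_inv_pow_mul_iterate_PgC_setIntegral hHA.setup hHA.lam_pos hHA.Pstar hHA.g_cont
    hgi hV (hh.ofReal.indicator hgS)
    (fun y hy => Set.indicator_of_notMem (s := {x | 0 < g x}) hy _) ℓ hx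
  have hiter : ∀ n, (PgC φ κ g)^[n] ({y | 0 < g y}.indicator fun y => (h y : ℂ)) x
      = (Pg φ κ g)^[n] h x := fun n => by
    rw [iterate_PgC_indicator_apply _ (hgi.supported s x hx), iterate_PgC_ofReal]
  have hint : ∫ y in {z | 0 < gi (s + ℓ) z}, {y | 0 < g y}.indicator (fun y => (h y : ℂ)) y ∂μ
      = ∫ y in {z | 0 < gi (s + ℓ) z}, h y ∂μ := by
    rw [setIntegral_congr_fun (hgi.measurableSet_pos _) fun y hy =>
      Set.indicator_of_mem (s := {x | 0 < g x}) (hgi.supported _ y hy) _, integral_complex_ofReal]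
  rw [integral_mtilde_restrict μ g (hgi.measurableSet_pos _) fun y => hgi.supported _ y,
    ← tendsto_ofReal_iff]
  simp only [hiter, hint] at hlim
  push_cast at hlim ⊢
  simpa only [mul_assoc] using hlim

/-- **Step 1 of Theorem A.8.** Under Hypothesis (HA), the cyclic family and
spectral decomposition hypotheses: for every bounded measurable `h`, all `ℓ, s ∈ {0,…,k-1}`
and every `x ∈ C_s`, `lam^{-(nk+ℓ)} P_g^{nk+ℓ} h(x) → g_s(x) ∫ h dμ̃_{s+ℓ (mod k)}`. -/
theorem statement18 (μ : Measure M) (κ : Kernel M M) (φ : M → ℝ)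
    (T : Lp ℂ ⊤ μ →L[ℂ] Lp ℂ ⊤ μ) (lam : ℝ) (g : M → ℝ)
    (hHA : HypHA μ κ φ T lam g)
    (k : ℕ) [NeZero k] (hk : PerSpecEq μ κ φ lam k)
    (gi : Fin k → M → ℝ) (hgi : CyclicFamily μ κ φ lam g k gi)
    (V : Submodule ℂ (M → ℂ)) (hV : SpecDecomp μ κ φ lam g k gi V) :
    ∀ h : M → ℝ, BddMeas h → ∀ (ℓ s : Fin k) (x : M), 0 < gi s x →
      Tendsto (fun n : ℕ =>
          (lam ^ (n * k + (ℓ : ℕ)))⁻¹ * (Pg φ κ g)^[n * k + (ℓ : ℕ)] h x) atTop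
        (nhds (gi s x * ∫ y, h y ∂((mtilde μ g).restrict {z | 0 < gi (s + ℓ) z}))) :=
  statement18_general μ κ φ T lam g hHA k gi hgi V hV

end

end QEM
end
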